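/- arXiv:2107.06030 — 7 statements merged into one kernel-verified Lean document; each statement's English description precedes it below -/
import Mathlib

section
/- The n-fold integral C_n := (4/n!) ∫_0^∞ ⋯ ∫_0^∞ (∑_{j=1}^n (u_j + u_j^{-1}))^{-2} du_1/u_1 ⋯ du_n/u_n equals the one-dimensional integral (2^n/n!) ∫_0^∞ t·K_0(t)^n dt, where K_0 is the modified Bessel function of the second kind of order 0. -/
open MeasureTheory Real

/-- Modified Bessel function of the second kind of order zero. -/
noncomputable def K0 (t : ℝ) : ℝ := ∫ u in Set.Ioi (0:ℝ), Real.exp (-t * Real.cosh u)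

/-!
Writing `S⁻² = ∫₀^∞ t e^{-tS} dt` for `S = ∑ⱼ (uⱼ + uⱼ⁻¹)` and exchanging the order of
integration (Tonelli), the `n`-fold integral becomes `∫₀^∞ t (∫₀^∞ e^{-t(u + u⁻¹)} du/u)ⁿ dt`.
The substitution `u = eᵛ` turns the inner integral into `∫_ℝ e^{-2t cosh v} dv = 2 K₀(2t)`,
and the rescaling `t ↦ t/2` produces the constants.
-/

open Set ENNReal

theorem lintegral_fin_pi_prod_eq_pow {E : Type*} [MeasurableSpace E] {μ : Measure E}
    [SigmaFinite μ] {f : E → ℝ≥0∞} (hf : Measurable f) (n : ℕ) :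
    ∫⁻ x : Fin n → E, ∏ i, f (x i) ∂Measure.pi (fun _ => μ) = (∫⁻ x, f x ∂μ) ^ n := by
  induction n with
  | zero => simp
  | succ n ih =>
    have hprod : Measurable fun x : Fin n → E => ∏ i, f (x i) := by fun_prop
    calc ∫⁻ x : Fin (n + 1) → E, ∏ i, f (x i) ∂Measure.pi (fun _ => μ)
        = ∫⁻ y : E × (Fin n → E), f y.1 * ∏ i, f (y.2 i)
            ∂μ.prod (Measure.pi fun _ => μ) := by
          rw [← (measurePreserving_piFinSuccAbove (fun _ => μ) 0).symm.lintegral_comp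
            (by fun_prop)]
          simp_rw [MeasurableEquiv.piFinSuccAbove_symm_apply, Fin.insertNthEquiv,
            Fin.prod_univ_succ, Fin.insertNth_zero, Equiv.coe_fn_mk, Fin.cons_succ,
            Fin.cons_zero, cast_eq]
      _ = (∫⁻ x, f x ∂μ) ^ (n + 1) := by
          rw [lintegral_prod_mul hf.aemeasurable hprod.aemeasurable, ih, pow_succ']

theorem lintegral_mul_exp_neg_mul_Ioi {x : ℝ} (hx : 0 < x) :
    ∫⁻ t in Ioi 0, ENNReal.ofReal (t * exp (-(t * x))) = ENNReal.ofReal ((x ^ 2)⁻¹) := by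
  have hint : IntegrableOn (fun t : ℝ => t * exp (-(t * x))) (Ioi 0) := by
    simpa [mul_comm] using
      integrableOn_rpow_mul_exp_neg_mul_rpow (p := 1) (s := 1) (b := x) (by norm_num) one_pos hx
  have hval : ∫ t in Ioi 0, t * exp (-(t * x)) = (x ^ 2)⁻¹ := by
    have h := integral_rpow_mul_exp_neg_mul_Ioi (a := 2) (r := x) two_pos hx
    norm_num [mul_comm x] at h
    exact h
  rw [← ofReal_integral_eq_lintegral_ofReal hint, hval]
  filter_upwards [ae_restrict_mem measurableSet_Ioi] with t (ht : 0 < t)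
  exact mul_nonneg ht.le (exp_pos _).le

theorem lintegral_pi_inv_sq_sum_mul_prod {E : Type*} [MeasurableSpace E] {μ : Measure E}
    [SigmaFinite μ] {s : Set E} (hs : MeasurableSet s) {f w : E → ℝ} (hf : Measurable f)
    (hw : Measurable w) (hf_pos : ∀ u ∈ s, 0 < f u) (hw_nonneg : ∀ u ∈ s, 0 ≤ w u)
    {n : ℕ} (hn : 0 < n) :
    ∫⁻ x in univ.pi (fun _ : Fin n => s), ENNReal.ofReal (((∑ j, f (x j)) ^ 2)⁻¹ * ∏ j, w (x j))
        ∂Measure.pi (fun _ => μ) =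
      ∫⁻ t in Ioi 0, ENNReal.ofReal t *
        (∫⁻ u in s, ENNReal.ofReal (exp (-(t * f u)) * w u) ∂μ) ^ n := by
  have hsum_pos : ∀ x ∈ univ.pi (fun _ : Fin n => s), 0 < ∑ j, f (x j) := fun x hx =>
    Finset.sum_pos (fun j _ => hf_pos _ (hx j trivial)) ⟨⟨0, hn⟩, Finset.mem_univ _⟩
  have hF : Measurable fun p : (Fin n → E) × ℝ =>
      ENNReal.ofReal p.2 * ∏ j, ENNReal.ofReal (exp (-(p.2 * f (p.1 j))) * w (p.1 j)) := by
    fun_prop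
  calc _ = ∫⁻ x in univ.pi (fun _ : Fin n => s), (∫⁻ t in Ioi 0,
          ENNReal.ofReal t * ∏ j, ENNReal.ofReal (exp (-(t * f (x j))) * w (x j)))
            ∂Measure.pi (fun _ => μ) := by
        refine setLIntegral_congr_fun (.univ_pi fun _ => hs) fun x hx => ?_
        have hw_x : ∀ j, 0 ≤ w (x j) := fun j => hw_nonneg _ (hx j trivial)
        rw [ENNReal.ofReal_mul (by positivity), ← lintegral_mul_exp_neg_mul_Ioi (hsum_pos x hx),
          ← lintegral_mul_const' _ _ ofReal_ne_top]
        refine setLIntegral_congr_fun measurableSet_Ioi fun t (ht : 0 < t) => ?_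
        rw [← ofReal_prod_of_nonneg fun j _ => mul_nonneg (exp_pos _).le (hw_x j),
          ← ENNReal.ofReal_mul (by positivity), ← ENNReal.ofReal_mul ht.le,
          Finset.prod_mul_distrib, ← exp_sum, Finset.mul_sum, Finset.sum_neg_distrib, mul_assoc]
    _ = ∫⁻ t in Ioi 0, ENNReal.ofReal t * ∫⁻ x in univ.pi (fun _ : Fin n => s),
          ∏ j, ENNReal.ofReal (exp (-(t * f (x j))) * w (x j)) ∂Measure.pi (fun _ => μ) := by
        rw [lintegral_lintegral_swap hF.aemeasurable]
        exact lintegral_congr fun t => lintegral_const_mul _ (by fun_prop)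
    _ = _ := by
        simp_rw [Measure.restrict_pi_pi]
        refine lintegral_congr fun t => congrArg _ ?_
        exact lintegral_fin_pi_prod_eq_pow
          (f := fun u => ENNReal.ofReal (exp (-(t * f u)) * w u)) (by fun_prop) n

theorem sq_div_four_le_cosh (u : ℝ) : u ^ 2 / 4 ≤ cosh u := by
  have h := quadratic_le_exp_of_nonneg (abs_nonneg u)
  rw [sq_abs] at h
  rw [← cosh_abs, cosh_eq]
  linarith [exp_pos (-|u|), abs_nonneg u]

theorem integrable_exp_neg_mul_cosh {t : ℝ} (ht : 0 < t) :
    Integrable fun u => exp (-t * cosh u) := by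
  refine (integrable_exp_neg_mul_sq (by positivity : 0 < t / 4)).mono'
    (by fun_prop : Continuous _).aestronglyMeasurable (.of_forall fun u => ?_)
  rw [norm_of_nonneg (exp_pos _).le, exp_le_exp]
  nlinarith [sq_div_four_le_cosh u]

theorem K0_nonneg (t : ℝ) : 0 ≤ K0 t :=
  integral_nonneg fun _ => (exp_pos _).le

@[fun_prop]
theorem measurable_K0 : Measurable K0 :=
  (StronglyMeasurable.integral_prod_right (f := fun t u : ℝ => exp (-t * cosh u))
    (by fun_prop : Continuous fun p : ℝ × ℝ => exp (-p.1 * cosh p.2)).stronglyMeasurable).measurable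

theorem integral_exp_neg_mul_cosh (t : ℝ) : ∫ u, exp (-t * cosh u) = 2 * K0 t := by
  rw [K0, ← integral_comp_abs]
  simp only [cosh_abs]

theorem lintegral_exp_neg_mul_add_inv_mul_inv {t : ℝ} (ht : 0 < t) :
    ∫⁻ u in Ioi 0, ENNReal.ofReal (exp (-(t * (u + u⁻¹))) * u⁻¹) =
      ENNReal.ofReal (2 * K0 (2 * t)) := by
  rw [← range_exp, ← image_univ, lintegral_image_eq_lintegral_abs_deriv_mul .univ
    (fun x _ => (hasDerivAt_exp x).hasDerivWithinAt) exp_injective.injOn, Measure.restrict_univ,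
    ← integral_exp_neg_mul_cosh, ofReal_integral_eq_lintegral_ofReal
      (integrable_exp_neg_mul_cosh (by positivity)) (.of_forall fun _ => (exp_pos _).le)]
  refine lintegral_congr fun v => ?_
  rw [abs_of_pos (exp_pos v), ← ENNReal.ofReal_mul (exp_pos v).le, cosh_eq, ← exp_neg,
    mul_left_comm, ← exp_add, add_neg_cancel, exp_zero, mul_one]
  ring_nf

theorem lintegral_pi_Ioi_inv_sq_sum_add_inv {n : ℕ} (hn : 0 < n) :
    ∫⁻ u in univ.pi (fun _ : Fin n => Ioi (0:ℝ)),
        ENNReal.ofReal (((∑ j, (u j + (u j)⁻¹)) ^ 2)⁻¹ * ∏ j, (u j)⁻¹) =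
      ∫⁻ t in Ioi 0, ENNReal.ofReal (t * (2 * K0 (2 * t)) ^ n) := by
  rw [volume_pi, lintegral_pi_inv_sq_sum_mul_prod (f := fun u => u + u⁻¹) (w := fun u => u⁻¹)
    measurableSet_Ioi (by fun_prop) (by fun_prop) (fun u (hu : 0 < u) => by positivity)
    (fun u (hu : 0 < u) => by positivity) hn]
  refine setLIntegral_congr_fun measurableSet_Ioi fun t (ht : 0 < t) => ?_
  rw [lintegral_exp_neg_mul_add_inv_mul_inv ht,
    ← ofReal_pow (mul_nonneg zero_le_two (K0_nonneg _)), ← ENNReal.ofReal_mul ht.le]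

theorem integral_mul_K0_pow_eq_four_mul (n : ℕ) :
    ∫ t in Ioi 0, t * K0 t ^ n = 4 * ∫ t in Ioi 0, t * K0 (2 * t) ^ n := by
  have h := integral_comp_mul_left_Ioi (fun t => t * K0 t ^ n) 0 two_pos
  simp only [mul_zero, smul_eq_mul, mul_assoc, integral_const_mul] at h
  linarith

theorem Cn_multiple_integral_eq_one_dim (n : ℕ) (hn : 1 ≤ n) :
    (4 / n.factorial : ℝ) *
      ∫ u in Set.univ.pi (fun _ : Fin n => Set.Ioi (0:ℝ)),
        ((∑ j, (u j + (u j)⁻¹))^2)⁻¹ * (∏ j, u j)⁻¹ =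
    (2 ^ n / n.factorial : ℝ) * ∫ t in Set.Ioi (0:ℝ), t * K0 t ^ n := by
  have hmulti : ∫ u in univ.pi (fun _ : Fin n => Ioi (0:ℝ)),
      ((∑ j, (u j + (u j)⁻¹)) ^ 2)⁻¹ * (∏ j, u j)⁻¹ = ∫ t in Ioi 0, t * (2 * K0 (2 * t)) ^ n := by
    simp_rw [← Finset.prod_inv_distrib]
    rw [integral_eq_lintegral_of_nonneg_ae, integral_eq_lintegral_of_nonneg_ae,
      lintegral_pi_Ioi_inv_sq_sum_add_inv hn]
    · filter_upwards [ae_restrict_mem measurableSet_Ioi] with t (ht : 0 < t)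
      exact mul_nonneg ht.le (pow_nonneg (mul_nonneg zero_le_two (K0_nonneg _)) n)
    · fun_prop
    · filter_upwards [ae_restrict_mem (.univ_pi fun _ => measurableSet_Ioi)] with u hu
      exact mul_nonneg (by positivity)
        (Finset.prod_nonneg fun j _ => inv_nonneg.2 (le_of_lt (hu j trivial)))
    · fun_prop
  rw [hmulti, integral_mul_K0_pow_eq_four_mul]
  simp_rw [mul_pow, mul_left_comm _ (2 ^ n : ℝ), integral_const_mul]
  ring
end

section
/- For N = 1: 1/2 + ∑_{n=1}^∞ ∏_{k=0}^{1} sinc(n/(2k+1)) = ∫_0^∞ ∏_{k=0}^{1} sinc(x/(2k+1)) dx, i.e., 1/2 + ∑_{n=1}^∞ sinc(n)·sinc(n/3) = ∫_0^∞ sinc(x)·sinc(x/3) dx. -/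
/-!
Since `sin a * sin b = (cos (a - b) - cos (a + b)) / 2`, both the summand and the integrand
equal `(3 / 2) * (cos (2x/3) - cos (4x/3)) / x²`. The Fourier series of the Bernoulli
polynomial `B₂` gives `∑_{n ≥ 1} cos (nθ) / n² = π²/6 - πθ/2 + θ²/4` on `[0, 2π]`, so the
series equals `(π - 1) / 2`. For the integral, `∫₀^∞ (1 - cos (cx)) / x² dx = cπ/2`: writing
`1 / x² = ∫₀^∞ t e^{-xt} dt` and exchanging the integrals (Tonelli), the Laplace transform of
`1 - cos` reduces the case `c = 1` to `∫₀^∞ dt / (1 + t²) = π/2`. Hence the integral is `π/2`.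
-/

open MeasureTheory Real

/-- sinc x = sin x / x for x ≠ 0, sinc 0 = 1. -/
noncomputable def sinc (x : ℝ) : ℝ := if x = 0 then 1 else Real.sin x / x

open Set Filter

lemma sinc_mul_sinc {a b : ℝ} (ha : a ≠ 0) (hb : b ≠ 0) :
    _root_.sinc a * _root_.sinc b = (cos (a - b) - cos (a + b)) / (2 * a * b) := by
  rw [_root_.sinc, _root_.sinc, if_neg ha, if_neg hb, cos_sub, cos_add]
  field_simp
  ring

lemma sinc_mul_sinc_div_three {x : ℝ} (hx : x ≠ 0) :
    _root_.sinc x * _root_.sinc (x / 3) =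
      3 / 2 * ((cos (x * (2 / 3)) - cos (x * (4 / 3))) / x ^ 2) := by
  rw [sinc_mul_sinc hx (div_ne_zero hx three_ne_zero), show x - x / 3 = x * (2 / 3) by ring,
    show x + x / 3 = x * (4 / 3) by ring]
  field_simp

theorem hasSum_cos_succ_mul_div_sq {θ : ℝ} (h₀ : 0 ≤ θ) (h₁ : θ ≤ 2 * π) :
    HasSum (fun n : ℕ => cos ((n + 1) * θ) / (n + 1) ^ 2)
      (π ^ 2 / 6 - π * θ / 2 + θ ^ 2 / 4) := by
  have hθ : θ / (2 * π) ∈ Icc (0 : ℝ) 1 := ⟨by positivity, (div_le_one (by positivity)).2 h₁⟩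
  have h : HasSum (fun n : ℕ => cos (n * θ) / n ^ 2) (π ^ 2 / 6 - π * θ / 2 + θ ^ 2 / 4) := by
    convert hasSum_one_div_nat_pow_mul_cos one_ne_zero hθ using 1
    · ext n
      rw [show 2 * π * n * (θ / (2 * π)) = n * θ by field_simp]
      ring
    · rw [Nat.mul_one, ← bernoulliFun, bernoulliFun_two, Nat.factorial_two]
      field_simp
      ring
  simpa using (hasSum_nat_add_iff' 1).2 h

theorem hasSum_sinc_mul_sinc_div_three :
    HasSum (fun n : ℕ => _root_.sinc (n + 1) * _root_.sinc ((n + 1) / 3)) ((π - 1) / 2) := by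
  have h₁ := hasSum_cos_succ_mul_div_sq (θ := 2 / 3) (by norm_num) (by linarith [pi_gt_three])
  have h₂ := hasSum_cos_succ_mul_div_sq (θ := 4 / 3) (by norm_num) (by linarith [pi_gt_three])
  have hterm (n : ℕ) : _root_.sinc (n + 1) * _root_.sinc ((n + 1) / 3) =
      3 / 2 * (cos ((n + 1) * (2 / 3)) / (n + 1) ^ 2 -
        cos ((n + 1) * (4 / 3)) / (n + 1) ^ 2) := by
    rw [sinc_mul_sinc_div_three (by positivity)]
    ring
  rw [show (π - 1) / 2 = 3 / 2 * ((π ^ 2 / 6 - π * (2 / 3) / 2 + (2 / 3) ^ 2 / 4) -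
    (π ^ 2 / 6 - π * (4 / 3) / 2 + (4 / 3) ^ 2 / 4)) by ring]
  exact ((h₁.sub h₂).mul_left (3 / 2)).congr_fun hterm

lemma one_sub_cos_nonneg (x : ℝ) : 0 ≤ 1 - cos x := sub_nonneg.2 (cos_le_one x)

lemma integral_mul_exp_neg_mul_Ioi {x : ℝ} (hx : 0 < x) :
    ∫ t in Ioi (0 : ℝ), t * exp (-(x * t)) = 1 / x ^ 2 := by
  have h := integral_rpow_mul_exp_neg_mul_Ioi two_pos hx
  norm_num [Gamma_two] at h
  simpa using h

lemma integrableOn_mul_exp_neg_mul_Ioi {x : ℝ} (hx : 0 < x) :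
    IntegrableOn (fun t : ℝ => t * exp (-(x * t))) (Ioi 0) :=
  .of_integral_ne_zero (by rw [integral_mul_exp_neg_mul_Ioi hx]; positivity)

lemma integral_one_sub_cos_mul_exp_neg_mul_Ioi {t : ℝ} (ht : 0 < t) :
    ∫ x in Ioi (0 : ℝ), (1 - cos x) * exp (-(t * x)) = 1 / (t * (1 + t ^ 2)) := by
  have ha : (-(t : ℂ)).re < 0 := by simpa using ht
  have hb : (-(t : ℂ) + Complex.I).re < 0 := by simpa using ht
  have hre (x : ℝ) : (1 - cos x) * exp (-(t * x)) =
      (Complex.exp (-t * x) - Complex.exp ((-t + Complex.I) * x)).re := by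
    simp [Complex.exp_re, sub_mul, mul_comm]
  have h₁ := integrableOn_exp_mul_complex_Ioi ha 0
  have h₂ := integrableOn_exp_mul_complex_Ioi hb 0
  simp_rw [hre]
  refine (integral_re (h₁.sub h₂)).trans ?_
  rw [Pi.sub_def, integral_sub h₁ h₂, integral_exp_mul_complex_Ioi ha,
    integral_exp_mul_complex_Ioi hb]
  simp [Complex.div_re, Complex.normSq_apply]
  field_simp
  ring

lemma integrableOn_one_sub_cos_mul_exp_neg_mul_Ioi {t : ℝ} (ht : 0 < t) :
    IntegrableOn (fun x : ℝ => (1 - cos x) * exp (-(t * x))) (Ioi 0) :=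
  .of_integral_ne_zero (by rw [integral_one_sub_cos_mul_exp_neg_mul_Ioi ht]; positivity)

lemma lintegral_one_sub_cos_div_sq_Ioi :
    ∫⁻ x in Ioi (0 : ℝ), ENNReal.ofReal ((1 - cos x) / x ^ 2) = ENNReal.ofReal (π / 2) := by
  have hdt {x : ℝ} (hx : 0 < x) : ∫⁻ t in Ioi 0, ENNReal.ofReal ((1 - cos x) *
      (t * exp (-(x * t)))) = ENNReal.ofReal ((1 - cos x) / x ^ 2) := by
    rw [← ofReal_integral_eq_lintegral_ofReal ((integrableOn_mul_exp_neg_mul_Ioi hx).const_mul _),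
      integral_const_mul, integral_mul_exp_neg_mul_Ioi hx, mul_one_div]
    filter_upwards [ae_restrict_mem measurableSet_Ioi] with t (ht : 0 < t)
    have := one_sub_cos_nonneg x
    positivity
  have hdx {t : ℝ} (ht : 0 < t) : ∫⁻ x in Ioi 0, ENNReal.ofReal ((1 - cos x) *
      (t * exp (-(x * t)))) = ENNReal.ofReal (1 / (1 + t ^ 2)) := by
    have hswap (x : ℝ) : (1 - cos x) * (t * exp (-(x * t))) =
        t * ((1 - cos x) * exp (-(t * x))) := by
      rw [mul_comm x t]; ring
    simp_rw [hswap]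
    rw [← ofReal_integral_eq_lintegral_ofReal
      ((integrableOn_one_sub_cos_mul_exp_neg_mul_Ioi ht).const_mul t),
      integral_const_mul, integral_one_sub_cos_mul_exp_neg_mul_Ioi ht]
    · field_simp
    · filter_upwards with x
      have := one_sub_cos_nonneg x
      positivity
  calc ∫⁻ x in Ioi (0 : ℝ), ENNReal.ofReal ((1 - cos x) / x ^ 2)
      = ∫⁻ x in Ioi (0 : ℝ), ∫⁻ t in Ioi 0,
          ENNReal.ofReal ((1 - cos x) * (t * exp (-(x * t)))) :=
        (setLIntegral_congr_fun measurableSet_Ioi fun x hx => hdt hx).symm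
    _ = ∫⁻ t in Ioi (0 : ℝ), ∫⁻ x in Ioi 0,
          ENNReal.ofReal ((1 - cos x) * (t * exp (-(x * t)))) :=
        lintegral_lintegral_swap (by fun_prop)
    _ = ∫⁻ t in Ioi (0 : ℝ), ENNReal.ofReal (1 / (1 + t ^ 2)) :=
        setLIntegral_congr_fun measurableSet_Ioi fun t ht => hdx ht
    _ = ENNReal.ofReal (π / 2) := by
        rw [← ofReal_integral_eq_lintegral_ofReal]
        · simp [integral_Ioi_inv_one_add_sq]
        · exact integrable_inv_one_add_sq.integrableOn.congr_fun
            (fun x _ => (one_div _).symm) measurableSet_Ioi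
        · exact Eventually.of_forall fun t => by positivity

lemma integral_one_sub_cos_div_sq_Ioi : ∫ x in Ioi (0 : ℝ), (1 - cos x) / x ^ 2 = π / 2 := by
  rw [integral_eq_lintegral_of_nonneg_ae, lintegral_one_sub_cos_div_sq_Ioi,
    ENNReal.toReal_ofReal (by positivity)]
  · filter_upwards with x
    have := one_sub_cos_nonneg x
    positivity
  · exact (by fun_prop : Measurable fun x : ℝ => (1 - cos x) / x ^ 2).aestronglyMeasurable

lemma integral_one_sub_cos_mul_div_sq_Ioi {c : ℝ} (hc : 0 < c) :
    ∫ x in Ioi (0 : ℝ), (1 - cos (c * x)) / x ^ 2 = c * (π / 2) := by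
  have h := integral_comp_mul_left_Ioi (fun y => (1 - cos y) / y ^ 2) 0 hc
  rw [mul_zero, integral_one_sub_cos_div_sq_Ioi, smul_eq_mul] at h
  calc ∫ x in Ioi (0 : ℝ), (1 - cos (c * x)) / x ^ 2
      = ∫ x in Ioi (0 : ℝ), c ^ 2 * ((1 - cos (c * x)) / (c * x) ^ 2) :=
        setIntegral_congr_fun measurableSet_Ioi fun x (hx : 0 < x) => by field_simp
    _ = c * (π / 2) := by
        rw [integral_const_mul, h]
        field_simp

lemma integrableOn_one_sub_cos_mul_div_sq_Ioi {c : ℝ} (hc : 0 < c) :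
    IntegrableOn (fun x : ℝ => (1 - cos (c * x)) / x ^ 2) (Ioi 0) :=
  .of_integral_ne_zero (by rw [integral_one_sub_cos_mul_div_sq_Ioi hc]; positivity)

lemma integral_sinc_mul_sinc_div_three_Ioi :
    ∫ x in Ioi (0 : ℝ), _root_.sinc x * _root_.sinc (x / 3) = π / 2 := by
  have hrw : ∀ x ∈ Ioi (0 : ℝ), _root_.sinc x * _root_.sinc (x / 3) =
      3 / 2 * ((1 - cos (4 / 3 * x)) / x ^ 2 - (1 - cos (2 / 3 * x)) / x ^ 2) := fun x hx => by
    rw [sinc_mul_sinc_div_three (ne_of_gt hx), mul_comm x, mul_comm x]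
    ring
  rw [setIntegral_congr_fun measurableSet_Ioi hrw, integral_const_mul,
    integral_sub (integrableOn_one_sub_cos_mul_div_sq_Ioi (by norm_num))
      (integrableOn_one_sub_cos_mul_div_sq_Ioi (by norm_num)),
    integral_one_sub_cos_mul_div_sq_Ioi (by norm_num),
    integral_one_sub_cos_mul_div_sq_Ioi (by norm_num)]
  ring

theorem sinc_sum_eq_integral_N1 :
    1 / 2 + ∑' n : ℕ, _root_.sinc (n + 1) * _root_.sinc ((n + 1) / 3) =
      ∫ x in Set.Ioi (0:ℝ), _root_.sinc x * _root_.sinc (x / 3) := by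
  rw [hasSum_sinc_mul_sinc_div_three.tsum_eq, integral_sinc_mul_sinc_div_three_Ioi]
  ring
end

section
/- Gauss's identity: for 0 < k ≤ 1, the arithmetic–geometric mean satisfies AG₂(1,k) = 1 / ₂F₁(1/2, 1/2; 1; 1−k²), where ₂F₁ is the Gauss hypergeometric function. -/
/-!
The integral `I(p, q) = ∫ dt / √((t² + p²)(t² + q²))` over `ℝ` is unchanged by the AGM step
`(p, q) ↦ ((p + q)/2, √(pq))`: the substitution `t ↦ (t - pq/t)/2` maps `(0, ∞)` onto `ℝ`. Since
`I(c, c) = π / c` and `I` is antitone in both arguments, `π / max(p, q) ≤ I(p, q) ≤ π / min(p, q)`,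
and along the AGM iteration both bounds tend to `π / M`, so `I(1, k) = π / M`.
On the other hand `t = tan θ` turns `I(1, k)` into `∫ (1 - (1 - k²) cos² θ)^(-1/2)` over
`(-π/2, π/2)`; expanding with the binomial series and integrating termwise against Wallis'
integrals `∫ cos^(2n) = π (1/2)ₙ / n!` gives `π · ₂F₁(1/2, 1/2; 1; 1 - k²)`.
-/

/-- Gauss hypergeometric function ₂F₁(a,b;c;z) as a power series sum. -/
noncomputable def hyp2F1 (a b c z : ℝ) : ℝ :=
  ∑' n : ℕ, (ascPochhammer ℝ n).eval a * (ascPochhammer ℝ n).eval b /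
    ((ascPochhammer ℝ n).eval c * n.factorial) * z ^ n

open Finset Real Nat MeasureTheory Set Filter Topology

noncomputable def wallisCoeff (n : ℕ) : ℝ := ∏ i ∈ range n, (2 * (i : ℝ) + 1) / (2 * i + 2)

lemma wallisCoeff_nonneg (n : ℕ) : 0 ≤ wallisCoeff n :=
  prod_nonneg fun i _ => by positivity

lemma wallisCoeff_le_one (n : ℕ) : wallisCoeff n ≤ 1 :=
  prod_le_one (fun i _ => by positivity) fun i _ =>
    (div_le_one (by positivity)).2 (by linarith)

lemma wallisCoeff_succ (n : ℕ) :
    wallisCoeff (n + 1) = wallisCoeff n * ((2 * n + 1) / (2 * n + 2)) :=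
  prod_range_succ _ n

lemma ascPochhammer_eval_half (n : ℕ) :
    (ascPochhammer ℝ n).eval (1 / 2) = wallisCoeff n * n ! := by
  induction n with
  | zero => simp [wallisCoeff]
  | succ n ih =>
    rw [ascPochhammer_succ_eval, ih, wallisCoeff_succ, Nat.factorial_succ]
    push_cast
    field_simp
    ring

lemma hyp2F1_half_half_one (x : ℝ) :
    hyp2F1 (1 / 2) (1 / 2) 1 x = ∑' n, wallisCoeff n ^ 2 * x ^ n := by
  refine tsum_congr fun n => ?_
  have : (n ! : ℝ) ≠ 0 := by positivity
  rw [ascPochhammer_eval_half, ascPochhammer_eval_one]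
  field_simp

lemma choose_add_half_sub_one (n : ℕ) :
    Ring.choose ((1 / 2 : ℝ) + n - 1) n = wallisCoeff n := by
  have : (n ! : ℝ) ≠ 0 := by positivity
  rw [Ring.choose_eq_smul, Polynomial.descPochhammer_smeval_eq_ascPochhammer,
    Polynomial.ascPochhammer_smeval_eq_eval, show (1 / 2 : ℝ) + n - 1 - n + 1 = 1 / 2 by ring,
    ascPochhammer_eval_half, smul_eq_mul]
  field_simp

lemma hasSum_wallisCoeff_mul_pow {x : ℝ} (hx : |x| < 1) :
    HasSum (fun n => wallisCoeff n * x ^ n) (√(1 - x))⁻¹ := by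
  have h := (Real.one_div_one_sub_rpow_hasFPowerSeriesOnBall_zero (1 / 2)).hasSum
    (y := x) (by simpa [enorm_eq_nnnorm, ← NNReal.coe_lt_one] using hx)
  rw [zero_add, ← Real.sqrt_eq_rpow, one_div (√(1 - x))] at h
  refine h.congr_fun fun n => ?_
  rw [FormalMultilinearSeries.ofScalars_apply_eq, choose_add_half_sub_one, smul_eq_mul, mul_comm]

lemma integral_cos_pow_two_mul (n : ℕ) :
    ∫ θ in -(π / 2)..π / 2, cos θ ^ (2 * n) = π * wallisCoeff n := by
  have := intervalIntegral.integral_comp_add_right (fun θ => sin θ ^ (2 * n)) (π / 2)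
    (a := -(π / 2)) (b := π / 2)
  simp only [sin_add_pi_div_two] at this
  rw [this, neg_add_cancel, add_halves, integral_sin_pow_even, wallisCoeff]

lemma hasSum_integral_inv_sqrt_one_sub_mul_cos_sq {x : ℝ} (hx : |x| < 1) :
    HasSum (fun n => π * (wallisCoeff n ^ 2 * x ^ n))
      (∫ θ in -(π / 2)..π / 2, (√(1 - x * cos θ ^ 2))⁻¹) := by
  have hterm (n : ℕ) (θ : ℝ) : wallisCoeff n * (x * cos θ ^ 2) ^ n =
      wallisCoeff n * x ^ n * cos θ ^ (2 * n) := by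
    rw [mul_pow, pow_mul]; ring
  have hsum := intervalIntegral.hasSum_integral_of_dominated_convergence
    (F := fun n θ => wallisCoeff n * x ^ n * cos θ ^ (2 * n)) (μ := volume)
    (a := -(π / 2)) (b := π / 2) (f := fun θ => (√(1 - x * cos θ ^ 2))⁻¹)
    (fun n _ => wallisCoeff n * |x| ^ n)
    (fun n => by fun_prop)
    (fun n => ae_of_all _ fun θ _ => by
      simp only [norm_mul, norm_pow, Real.norm_eq_abs, abs_of_nonneg (wallisCoeff_nonneg n)]
      exact mul_le_of_le_one_right (mul_nonneg (wallisCoeff_nonneg n) (by positivity))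
        (pow_le_one₀ (abs_nonneg _) (abs_cos_le_one θ)))
    (ae_of_all _ fun θ _ => (summable_geometric_of_lt_one (abs_nonneg x) hx).of_nonneg_of_le
      (fun n => mul_nonneg (wallisCoeff_nonneg n) (by positivity))
      fun n => mul_le_of_le_one_left (by positivity) (wallisCoeff_le_one n))
    intervalIntegrable_const
    (ae_of_all _ fun θ _ => by
      have hxc : |x * cos θ ^ 2| < 1 := by
        rw [abs_mul, abs_pow, sq_abs]
        exact lt_of_le_of_lt (mul_le_of_le_one_right (abs_nonneg x) (cos_sq_le_one θ)) hx
      simpa only [hterm] using hasSum_wallisCoeff_mul_pow hxc)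
  refine hsum.congr_fun fun n => ?_
  rw [intervalIntegral.integral_const_mul, integral_cos_pow_two_mul]
  ring

noncomputable def agmIntegrand (p q t : ℝ) : ℝ := (√((t ^ 2 + p ^ 2) * (t ^ 2 + q ^ 2)))⁻¹

noncomputable def agmIntegral (p q : ℝ) : ℝ := ∫ t, agmIntegrand p q t

lemma agmIntegrand_self (c t : ℝ) : agmIntegrand c c t = (t ^ 2 + c ^ 2)⁻¹ := by
  rw [agmIntegrand, sqrt_mul_self (by positivity)]

lemma agmIntegrand_abs (p q t : ℝ) : agmIntegrand p q |t| = agmIntegrand p q t := by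
  rw [agmIntegrand, agmIntegrand, sq_abs]

lemma agmIntegrand_nonneg (p q t : ℝ) : 0 ≤ agmIntegrand p q t := by
  unfold agmIntegrand; positivity

lemma agmIntegrand_anti {p p' q q' : ℝ} (hp' : 0 < p') (hp : p' ≤ p) (hq' : 0 < q') (hq : q' ≤ q)
    (t : ℝ) : agmIntegrand p q t ≤ agmIntegrand p' q' t := by
  unfold agmIntegrand
  gcongr

lemma integrable_inv_sq_add_sq {c : ℝ} (hc : c ≠ 0) :
    Integrable fun t : ℝ => (t ^ 2 + c ^ 2)⁻¹ := by
  refine ((integrable_inv_one_add_sq.comp_div hc).const_mul (c ^ 2)⁻¹).congr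
    (ae_of_all _ fun t => ?_)
  field_simp
  ring

lemma integral_univ_inv_sq_add_sq {c : ℝ} (hc : 0 < c) :
    ∫ t : ℝ, (t ^ 2 + c ^ 2)⁻¹ = π / c := by
  have h := Measure.integral_comp_inv_mul_left (fun t : ℝ => (1 + t ^ 2)⁻¹) c
  rw [integral_univ_inv_one_add_sq, abs_of_pos hc, smul_eq_mul] at h
  calc ∫ t : ℝ, (t ^ 2 + c ^ 2)⁻¹ = ∫ t : ℝ, (c ^ 2)⁻¹ * (1 + (c⁻¹ * t) ^ 2)⁻¹ := by
        congr 1 with t; field_simp; ring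
    _ = π / c := by rw [integral_const_mul, h]; field_simp

lemma integrable_agmIntegrand {p q : ℝ} (hp : 0 < p) (hq : 0 < q) :
    Integrable (agmIntegrand p q) := by
  have hm : 0 < min p q := lt_min hp hq
  refine (integrable_inv_sq_add_sq hm.ne').mono' (by unfold agmIntegrand; fun_prop)
    (ae_of_all _ fun t => ?_)
  rw [norm_of_nonneg (agmIntegrand_nonneg p q t), ← agmIntegrand_self]
  exact agmIntegrand_anti hm (min_le_left p q) hm (min_le_right p q) t

lemma agmIntegral_self {c : ℝ} (hc : 0 < c) : agmIntegral c c = π / c := by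
  simp only [agmIntegral, agmIntegrand_self, integral_univ_inv_sq_add_sq hc]

lemma agmIntegral_anti {p p' q q' : ℝ} (hp' : 0 < p') (hp : p' ≤ p) (hq' : 0 < q') (hq : q' ≤ q) :
    agmIntegral p q ≤ agmIntegral p' q' :=
  integral_mono (integrable_agmIntegrand (hp'.trans_le hp) (hq'.trans_le hq))
    (integrable_agmIntegrand hp' hq') (agmIntegrand_anti hp' hp hq' hq)

lemma min_mul_agmIntegral_le {p q : ℝ} (hp : 0 < p) (hq : 0 < q) :
    min p q * agmIntegral p q ≤ π := by
  have hm : 0 < min p q := lt_min hp hq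
  calc min p q * agmIntegral p q ≤ min p q * agmIntegral (min p q) (min p q) := by
        gcongr
        exact agmIntegral_anti hm (min_le_left p q) hm (min_le_right p q)
    _ = π := by rw [agmIntegral_self hm]; field_simp

lemma le_max_mul_agmIntegral {p q : ℝ} (hp : 0 < p) (hq : 0 < q) :
    π ≤ max p q * agmIntegral p q := by
  have hm : 0 < max p q := lt_max_of_lt_left hp
  calc π = max p q * agmIntegral (max p q) (max p q) := by
        rw [agmIntegral_self hm]; field_simp
    _ ≤ max p q * agmIntegral p q := by
        gcongr
        exact agmIntegral_anti hp (le_max_left p q) hq (le_max_right p q)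

lemma agmIntegral_eq_two_mul_integral_Ioi (p q : ℝ) :
    agmIntegral p q = 2 * ∫ t in Ioi 0, agmIntegrand p q t := by
  simp only [agmIntegral, ← integral_comp_abs, agmIntegrand_abs]

lemma agmIntegrand_agm_step_subst {p q t : ℝ} (hp : 0 < p) (hq : 0 < q) (ht : 0 < t) :
    (1 + p * q / t ^ 2) / 2 * agmIntegrand ((p + q) / 2) √(p * q) ((t - p * q / t) / 2) =
      2 * agmIntegrand p q t := by
  have hD : 0 < (t ^ 2 + p ^ 2) * (t ^ 2 + q ^ 2) := by positivity
  have hfactor : (((t - p * q / t) / 2) ^ 2 + ((p + q) / 2) ^ 2) *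
      (((t - p * q / t) / 2) ^ 2 + √(p * q) ^ 2) =
        (t ^ 2 + p ^ 2) * (t ^ 2 + q ^ 2) * ((t ^ 2 + p * q) / (4 * t ^ 2)) ^ 2 := by
    rw [sq_sqrt (by positivity)]
    field_simp
    ring
  rw [agmIntegrand, agmIntegrand, hfactor, sqrt_mul hD.le, sqrt_sq (by positivity)]
  have : 0 < √((t ^ 2 + p ^ 2) * (t ^ 2 + q ^ 2)) := sqrt_pos.2 hD
  field_simp
  ring

lemma agmIntegral_agm_step {p q : ℝ} (hp : 0 < p) (hq : 0 < q) :
    agmIntegral ((p + q) / 2) √(p * q) = agmIntegral p q := by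
  set ψ : ℝ → ℝ := fun t => (t - p * q / t) / 2
  have hpq : 0 < p * q := mul_pos hp hq
  have hψ_deriv : ∀ t ∈ Ioi (0 : ℝ), HasDerivWithinAt ψ ((1 + p * q / t ^ 2) / 2) (Ioi 0) t := by
    intro t ht
    have h : HasDerivAt ψ ((1 - p * q * -(t ^ 2)⁻¹) / 2) t :=
      ((hasDerivAt_id' t).sub ((hasDerivAt_inv (ne_of_gt ht)).const_mul (p * q))).div_const 2
    exact (h.congr_deriv (by ring)).hasDerivWithinAt
  have hψ_inj : InjOn ψ (Ioi 0) := by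
    refine StrictMonoOn.injOn fun u hu v hv huv => ?_
    have : p * q / v < p * q / u := div_lt_div_of_pos_left hpq hu huv
    simp only [ψ]
    linarith
  -- `t = u + √(u² + pq)` is the positive root of `t² - 2ut - pq = 0`, i.e. of `ψ t = u`.
  have hψ_image : ψ '' Ioi 0 = univ := by
    refine eq_univ_of_forall fun u => ?_
    have hs : √(u ^ 2 + p * q) ^ 2 = u ^ 2 + p * q := sq_sqrt (by positivity)
    have ht : 0 < u + √(u ^ 2 + p * q) := by
      have : |u| < √(u ^ 2 + p * q) := by
        rw [← sqrt_sq_eq_abs]; exact sqrt_lt_sqrt (sq_nonneg u) (by linarith)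
      linarith [neg_abs_le u]
    refine ⟨u + √(u ^ 2 + p * q), ht, ?_⟩
    simp only [ψ]
    field_simp
    linear_combination hs
  have h := integral_image_eq_integral_abs_deriv_smul measurableSet_Ioi hψ_deriv hψ_inj
    (agmIntegrand ((p + q) / 2) √(p * q))
  rw [hψ_image, setIntegral_univ] at h
  rw [agmIntegral, h, agmIntegral_eq_two_mul_integral_Ioi, ← integral_const_mul]
  refine setIntegral_congr_fun measurableSet_Ioi fun t ht => ?_
  rw [abs_of_pos (by positivity), smul_eq_mul, agmIntegrand_agm_step_subst hp hq ht]

lemma agmIntegral_one_eq_integral_cos (k : ℝ) :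
    agmIntegral 1 k = ∫ θ in -(π / 2)..π / 2, (√(1 - (1 - k ^ 2) * cos θ ^ 2))⁻¹ := by
  have h := integral_image_eq_integral_abs_deriv_smul MeasurableSet.univ
    (fun t _ => (hasDerivAt_arctan' t).hasDerivWithinAt) arctan_injective.injOn
    (fun θ => (√(1 - (1 - k ^ 2) * cos θ ^ 2))⁻¹)
  rw [image_univ, range_arctan, setIntegral_univ] at h
  rw [intervalIntegral.integral_of_le (by linarith [pi_pos]), integral_Ioc_eq_integral_Ioo, h,
    agmIntegral]
  refine integral_congr_ae (ae_of_all _ fun t => ?_)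
  have h1 : (0 : ℝ) < 1 + t ^ 2 := by positivity
  have h2 : 1 - (1 - k ^ 2) * cos (arctan t) ^ 2 = (t ^ 2 + k ^ 2) / (1 + t ^ 2) := by
    rw [cos_sq_arctan]; field_simp; ring
  simp only [agmIntegrand, h2, abs_of_pos (inv_pos.2 h1), smul_eq_mul, sqrt_div' _ h1.le]
  rw [show t ^ 2 + 1 ^ 2 = 1 + t ^ 2 by ring, sqrt_mul h1.le, inv_div, mul_inv]
  have : 0 < √(1 + t ^ 2) := sqrt_pos.2 h1
  field_simp
  rw [sq_sqrt h1.le]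

lemma pi_mul_hyp2F1_half_half_one {k : ℝ} (hk : |1 - k ^ 2| < 1) :
    π * hyp2F1 (1 / 2) (1 / 2) 1 (1 - k ^ 2) = agmIntegral 1 k := by
  rw [hyp2F1_half_half_one, agmIntegral_one_eq_integral_cos, ← tsum_mul_left]
  exact (hasSum_integral_inv_sqrt_one_sub_mul_cos_sq hk).tsum_eq

section AGM

variable {a b : ℕ → ℝ} (ha : ∀ n, a (n + 1) = (a n + b n) / 2)
  (hb : ∀ n, b (n + 1) = √(a n * b n))
include ha hb

lemma agm_pos (ha0 : 0 < a 0) (hb0 : 0 < b 0) (n : ℕ) : 0 < a n ∧ 0 < b n := by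
  induction n with
  | zero => exact ⟨ha0, hb0⟩
  | succ n ih =>
    rw [ha, hb]
    exact ⟨by linarith [ih.1, ih.2], sqrt_pos.2 (mul_pos ih.1 ih.2)⟩

lemma agmIntegral_agm (ha0 : 0 < a 0) (hb0 : 0 < b 0) (n : ℕ) :
    agmIntegral (a n) (b n) = agmIntegral (a 0) (b 0) := by
  induction n with
  | zero => rfl
  | succ n ih =>
    obtain ⟨han, hbn⟩ := agm_pos ha hb ha0 hb0 n
    rw [ha, hb, agmIntegral_agm_step han hbn, ih]

lemma agm_limit_mul_agmIntegral (ha0 : 0 < a 0) (hb0 : 0 < b 0) {M : ℝ}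
    (haM : Tendsto a atTop (𝓝 M)) (hbM : Tendsto b atTop (𝓝 M)) :
    M * agmIntegral (a 0) (b 0) = π := by
  have hmin := (haM.min hbM).mul_const (agmIntegral (a 0) (b 0))
  have hmax := (haM.max hbM).mul_const (agmIntegral (a 0) (b 0))
  rw [min_self] at hmin
  rw [max_self] at hmax
  refine le_antisymm (le_of_tendsto' hmin fun n => ?_) (ge_of_tendsto' hmax fun n => ?_)
  all_goals
    obtain ⟨han, hbn⟩ := agm_pos ha hb ha0 hb0 n
    rw [← agmIntegral_agm ha hb ha0 hb0 n]
  · exact min_mul_agmIntegral_le han hbn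
  · exact le_max_mul_agmIntegral han hbn

end AGM

theorem gauss_agm_hypergeometric (k : ℝ) (hk0 : 0 < k) (hk1 : k ≤ 1)
    (a b : ℕ → ℝ) (ha0 : a 0 = 1) (hb0 : b 0 = k)
    (ha : ∀ n, a (n + 1) = (a n + b n) / 2)
    (hb : ∀ n, b (n + 1) = Real.sqrt (a n * b n))
    (M : ℝ)
    (haM : Filter.Tendsto a Filter.atTop (nhds M))
    (hbM : Filter.Tendsto b Filter.atTop (nhds M)) :
    M = 1 / hyp2F1 (1/2) (1/2) 1 (1 - k^2) := by
  have hk : |1 - k ^ 2| < 1 := abs_lt.2 ⟨by nlinarith, by nlinarith⟩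
  have hM : M * agmIntegral 1 k = π := by
    simpa only [ha0, hb0] using
      agm_limit_mul_agmIntegral ha hb (ha0 ▸ one_pos) (hb0 ▸ hk0) haM hbM
  rw [← pi_mul_hyp2F1_half_half_one hk] at hM
  exact eq_one_div_of_mul_eq_one_left (mul_left_cancel₀ pi_ne_zero (by linear_combination hM))
end

section
/- The Borwein cubic AGM identity: for 0 < k ≤ 1, AG₃(1,k) = 1 / ₂F₁(1/3, 2/3; 1; 1−k³), where AG₃ is the cubic analogue of the arithmetic-geometric mean. -/
open Filter Topology Set

section PowerSeries

variable {c : ℕ → ℝ} {C : ℝ} {k : ℕ} {z : ℝ}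

theorem summable_add_pow_mul_geometric (m : ℝ) (j : ℕ) {r : ℝ} (hr : |r| < 1) :
    Summable (fun n : ℕ => ((n : ℝ) + m) ^ j * r ^ n) := by
  simp_rw [add_pow, Finset.sum_mul]
  refine summable_sum fun i _ => ?_
  have hi := summable_pow_mul_geometric_of_norm_lt_one (R := ℝ) i (by simpa using hr)
  exact (hi.mul_right (m ^ (j - i) * (j.choose i))).congr fun n => by ring

theorem summable_mul_pow_of_abs_le (hc : ∀ n, |c n| ≤ C * ((n : ℝ) + 1) ^ k) (hz : |z| < 1) :
    Summable (fun n => c n * z ^ n) := by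
  refine Summable.of_norm_bounded
    ((summable_add_pow_mul_geometric 1 k (r := |z|) (by rwa [abs_abs])).mul_left C) fun n => ?_
  rw [norm_mul, norm_pow, Real.norm_eq_abs, Real.norm_eq_abs, ← mul_assoc]
  gcongr
  exact hc n

def derivCoeff (c : ℕ → ℝ) (n : ℕ) : ℝ := (n + 1) * c (n + 1)

theorem abs_derivCoeff_le (hc : ∀ n, |c n| ≤ C * ((n : ℝ) + 1) ^ k) (n : ℕ) :
    |derivCoeff c n| ≤ 2 ^ k * C * ((n : ℝ) + 1) ^ (k + 1) := by
  have hC : 0 ≤ C := by simpa using (abs_nonneg _).trans (hc 0)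
  have h2 : ((n : ℝ) + 1 + 1) ^ k ≤ (2 * ((n : ℝ) + 1)) ^ k := by gcongr; linarith
  calc |derivCoeff c n| = ((n : ℝ) + 1) * |c (n + 1)| := by
        rw [derivCoeff, abs_mul, abs_of_pos (by positivity)]
    _ ≤ ((n : ℝ) + 1) * (C * ((n : ℝ) + 1 + 1) ^ k) := by
        gcongr; simpa using hc (n + 1)
    _ ≤ ((n : ℝ) + 1) * (C * (2 * ((n : ℝ) + 1)) ^ k) := by gcongr
    _ = 2 ^ k * C * ((n : ℝ) + 1) ^ (k + 1) := by rw [mul_pow]; ring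

theorem hasSum_mul_pow_of_succ {f : ℕ → ℝ} {s : ℝ} (h0 : f 0 = 0)
    (h : HasSum (fun n => f (n + 1) * z ^ n) s) : HasSum (fun n => f n * z ^ n) (z * s) := by
  rw [← hasSum_nat_add_iff' 1]
  simpa [h0, pow_succ, mul_comm, mul_left_comm, mul_assoc] using h.mul_left z

theorem hasSum_derivCoeff_mul_pow (hc : ∀ n, |c n| ≤ C * ((n : ℝ) + 1) ^ k) (hz : |z| < 1) :
    HasSum (fun n => c n * (n * z ^ (n - 1))) (∑' n, derivCoeff c n * z ^ n) := by
  rw [← hasSum_nat_add_iff' 1]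
  simpa [derivCoeff, mul_comm, mul_left_comm, mul_assoc] using
    (summable_mul_pow_of_abs_le (abs_derivCoeff_le hc) hz).hasSum

theorem hasDerivAt_tsum_mul_pow (hc : ∀ n, |c n| ≤ C * ((n : ℝ) + 1) ^ k) (hz : |z| < 1) :
    HasDerivAt (fun x => ∑' n, c n * x ^ n) (∑' n, derivCoeff c n * z ^ n) z := by
  obtain ⟨r, hzr, hr1⟩ := exists_between hz
  have hr0 : 0 < r := (abs_nonneg z).trans_lt hzr
  have hr : |r| < 1 := by rwa [abs_of_pos hr0]
  have hu : Summable (fun n : ℕ => 2 ^ k * C * (n : ℝ) ^ (k + 1) * r ^ (n - 1)) := by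
    rw [← summable_nat_add_iff 1]
    simpa [mul_assoc] using (summable_add_pow_mul_geometric 1 (k + 1) hr).mul_left (2 ^ k * C)
  rw [← (hasSum_derivCoeff_mul_pow hc hz).tsum_eq]
  refine hasDerivAt_tsum_of_isPreconnected hu Metric.isOpen_ball (convex_ball 0 r).isPreconnected
    (fun n y _ => (hasDerivAt_pow n y).const_mul (c n)) (fun n y hy => ?_)
    (Metric.mem_ball_self hr0) (summable_mul_pow_of_abs_le hc (by simp))
    (by simpa using hzr)
  rw [Metric.mem_ball, dist_zero_right] at hy
  rcases n with _ | m
  · simp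
  · have hm := abs_derivCoeff_le hc m
    rw [derivCoeff] at hm
    calc ‖c (m + 1) * (((m + 1 : ℕ) : ℝ) * y ^ (m + 1 - 1))‖
        = |((m : ℝ) + 1) * c (m + 1)| * ‖y‖ ^ m := by
          rw [norm_mul, norm_mul, norm_pow]; push_cast; simp only [Real.norm_eq_abs, abs_mul]; ring
      _ ≤ 2 ^ k * C * ((m : ℝ) + 1) ^ (k + 1) * r ^ m := by
          gcongr
          exact (abs_nonneg _).trans hm
      _ = 2 ^ k * C * ((m + 1 : ℕ) : ℝ) ^ (k + 1) * r ^ (m + 1 - 1) := by push_cast; simp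

end PowerSeries

noncomputable def hyp2F1Coeff (a b c : ℝ) (n : ℕ) : ℝ :=
  (ascPochhammer ℝ n).eval a * (ascPochhammer ℝ n).eval b /
    ((ascPochhammer ℝ n).eval c * n.factorial)

theorem hyp2F1_eq_tsum (a b c z : ℝ) : hyp2F1 a b c z = ∑' n, hyp2F1Coeff a b c n * z ^ n := rfl

theorem ascPochhammer_eval_nonneg {x : ℝ} (hx : 0 ≤ x) (n : ℕ) :
    0 ≤ (ascPochhammer ℝ n).eval x := by
  induction n with
  | zero => simp
  | succ n ih => rw [ascPochhammer_succ_eval]; positivity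

theorem ascPochhammer_eval_le_eval {x y : ℝ} (hx : 0 ≤ x) (hxy : x ≤ y) (n : ℕ) :
    (ascPochhammer ℝ n).eval x ≤ (ascPochhammer ℝ n).eval y := by
  induction n with
  | zero => simp
  | succ n ih =>
    rw [ascPochhammer_succ_eval, ascPochhammer_succ_eval]
    gcongr
    exact ascPochhammer_eval_nonneg (hx.trans hxy) n

section Coeff
variable {a b c : ℝ}

@[simp] theorem hyp2F1Coeff_zero : hyp2F1Coeff a b c 0 = 1 := by simp [hyp2F1Coeff]

@[simp] theorem hyp2F1_zero : hyp2F1 a b c 0 = 1 := by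
  rw [hyp2F1_eq_tsum, tsum_eq_single 0 fun n hn => by simp [hn]]
  simp

theorem hyp2F1Coeff_succ (hc : 0 < c) (n : ℕ) :
    (c + n) * (n + 1) * hyp2F1Coeff a b c (n + 1) = (a + n) * (b + n) * hyp2F1Coeff a b c n := by
  have := ascPochhammer_pos n c hc
  have : c + n ≠ 0 := by positivity
  simp only [hyp2F1Coeff, ascPochhammer_succ_eval, Nat.factorial_succ]
  push_cast
  field_simp

theorem hyp2F1Coeff_nonneg (ha : 0 ≤ a) (hb : 0 ≤ b) (hc : 0 ≤ c) (n : ℕ) :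
    0 ≤ hyp2F1Coeff a b c n := by
  have := ascPochhammer_eval_nonneg ha n
  have := ascPochhammer_eval_nonneg hb n
  have := ascPochhammer_eval_nonneg hc n
  unfold hyp2F1Coeff
  positivity

theorem hyp2F1Coeff_le_one (ha : 0 ≤ a) (hac : a ≤ c) (hb : 0 ≤ b) (hb1 : b ≤ 1) (n : ℕ) :
    hyp2F1Coeff a b c n ≤ 1 := by
  refine div_le_one_of_le₀ ?_ (by have := ascPochhammer_eval_nonneg (ha.trans hac) n; positivity)
  rw [← ascPochhammer_eval_one]
  exact mul_le_mul (ascPochhammer_eval_le_eval ha hac n) (ascPochhammer_eval_le_eval hb hb1 n)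
    (ascPochhammer_eval_nonneg hb n) (ascPochhammer_eval_nonneg (ha.trans hac) n)

end Coeff

noncomputable def hyp2F1Deriv (a b c z : ℝ) : ℝ :=
  ∑' n, derivCoeff (hyp2F1Coeff a b c) n * z ^ n

section SturmLiouville

variable {a b z : ℝ} (ha : 0 ≤ a) (hb : 0 ≤ b) (hab : a + b = 1)
include ha hb hab

theorem abs_hyp2F1Coeff_le (n : ℕ) :
    |hyp2F1Coeff a b 1 n| ≤ 1 * ((n : ℝ) + 1) ^ 0 := by
  rw [pow_zero, one_mul, abs_of_nonneg (hyp2F1Coeff_nonneg ha hb zero_le_one n)]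
  exact hyp2F1Coeff_le_one ha (by linarith) hb (by linarith) n

theorem hasDerivAt_hyp2F1 (hz : |z| < 1) :
    HasDerivAt (hyp2F1 a b 1) (hyp2F1Deriv a b 1 z) z :=
  hasDerivAt_tsum_mul_pow (abs_hyp2F1Coeff_le ha hb hab) hz

theorem one_le_hyp2F1 (hz₀ : 0 ≤ z) (hz₁ : z < 1) : 1 ≤ hyp2F1 a b 1 z := by
  have hs := summable_mul_pow_of_abs_le (abs_hyp2F1Coeff_le ha hb hab)
    (by rwa [abs_of_nonneg hz₀] : |z| < 1)
  rw [hyp2F1_eq_tsum]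
  simpa using hs.le_tsum 0 fun n _ =>
    mul_nonneg (hyp2F1Coeff_nonneg ha hb zero_le_one n) (pow_nonneg hz₀ n)

/-- For `c = 1` and `a + b = 1` the hypergeometric equation is the Sturm–Liouville equation
`(z (1 - z) F')' = a b F`. -/
theorem hasDerivAt_flux_hyp2F1 (hz : |z| < 1) :
    HasDerivAt (fun x => x * (1 - x) * hyp2F1Deriv a b 1 x)
      (a * b * hyp2F1 a b 1 z) z := by
  set c := hyp2F1Coeff a b 1
  have hc := abs_hyp2F1Coeff_le ha hb hab
  have hc' := abs_derivCoeff_le hc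
  have hF : HasSum (fun n => c n * z ^ n) (hyp2F1 a b 1 z) :=
    (summable_mul_pow_of_abs_le hc hz).hasSum
  have hF' : HasSum (fun n => derivCoeff c n * z ^ n) (hyp2F1Deriv a b 1 z) :=
    (summable_mul_pow_of_abs_le hc' hz).hasSum
  set F'' := ∑' n, derivCoeff (derivCoeff c) n * z ^ n
  have hF'' : HasSum (fun n => derivCoeff (derivCoeff c) n * z ^ n) F'' :=
    (summable_mul_pow_of_abs_le (abs_derivCoeff_le hc') hz).hasSum
  have hzF' : HasSum (fun n => n * c n * z ^ n) (z * hyp2F1Deriv a b 1 z) :=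
    hasSum_mul_pow_of_succ (by simp) (hF'.congr_fun fun n => by simp [derivCoeff])
  have hzF'' : HasSum (fun n => n * derivCoeff c n * z ^ n) (z * F'') :=
    hasSum_mul_pow_of_succ (by simp) (hF''.congr_fun fun n => by simp [derivCoeff])
  have hz2F'' : HasSum (fun n => (n - 1) * (n * c n) * z ^ n) (z * (z * F'')) :=
    hasSum_mul_pow_of_succ (by simp) (hzF''.congr_fun fun n => by simp [derivCoeff])
  have hcombo := ((hF'.sub (hzF'.mul_left 2)).add hzF'').sub hz2F''
  have hrec : ∀ n : ℕ, derivCoeff c n - 2 * (n * c n) + n * derivCoeff c n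
      - (n - 1) * (n * c n) = a * b * c n := fun n => by
    have := hyp2F1Coeff_succ (a := a) (b := b) zero_lt_one n
    simp only [derivCoeff, c]
    linear_combination this + (n * c n) * hab
  have hsum := (hF.mul_left (a * b)).unique <| hcombo.congr_fun fun n => by
    linear_combination (-z ^ n) * hrec n
  have hprod := ((hasDerivAt_id' z).fun_mul ((hasDerivAt_id' z).const_sub 1)).fun_mul
    (hasDerivAt_tsum_mul_pow hc' hz)
  refine hprod.congr_deriv ?_
  rw [hsum]
  simp only [hyp2F1Deriv, F'', c]
  ring

end SturmLiouville

theorem eq_of_hasDerivAt_eq_zero {f : ℝ → ℝ} {x y : ℝ} (hxy : x ≤ y)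
    (hf : ContinuousOn f (Icc x y)) (hf' : ∀ t ∈ Ioo x y, HasDerivAt f 0 t) : f y = f x := by
  rcases hxy.eq_or_lt with rfl | hlt
  · rfl
  obtain ⟨_, _, h⟩ := exists_hasDerivAt_eq_slope f (fun _ => 0) hlt hf hf'
  rw [eq_comm, div_eq_zero_iff, sub_eq_zero] at h
  exact h.resolve_right (sub_ne_zero.mpr hlt.ne')

theorem abs_lt_one_of_mem_Ico {x : ℝ} (hx : x ∈ Ico (0 : ℝ) 1) : |x| < 1 := by
  rw [abs_of_nonneg hx.1]; exact hx.2

theorem cube_mem_Ico {t : ℝ} (ht : t ∈ Ico (0 : ℝ) 1) : t ^ 3 ∈ Ico (0 : ℝ) 1 :=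
  ⟨by have := ht.1; positivity, pow_lt_one₀ ht.1 ht.2 (by norm_num)⟩

theorem rpow_one_third_pow_three {x : ℝ} (hx : 0 ≤ x) : (x ^ ((1 : ℝ) / 3)) ^ 3 = x := by
  simpa using Real.rpow_inv_natCast_pow hx three_ne_zero

/-- If `U = P u'` and `V = P v'` are the fluxes of two solutions of `(P y')' = q y`, then
`u V - v U = P (u v' - v u')` is constant. -/
theorem hasDerivAt_wronskian_of_flux {u v U V : ℝ → ℝ} {u' v' P q t : ℝ}
    (hu : HasDerivAt u u' t) (hv : HasDerivAt v v' t)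
    (hU : HasDerivAt U (q * u t) t) (hV : HasDerivAt V (q * v t) t)
    (hUu : U t = P * u') (hVv : V t = P * v') :
    HasDerivAt (fun s => u s * V s - v s * U s) 0 t :=
  ((hu.fun_mul hV).fun_sub (hv.fun_mul hU)).congr_deriv (by rw [hUu, hVv]; ring)

section CubicTransformation

local notation "F₃" => hyp2F1 (1 / 3) (2 / 3) 1
local notation "F₃'" => hyp2F1Deriv (1 / 3) (2 / 3) 1

theorem hasDerivAt_hyp2F1_third {z : ℝ} (hz : |z| < 1) : HasDerivAt F₃ (F₃' z) z :=
  hasDerivAt_hyp2F1 (by norm_num) (by norm_num) (by norm_num) hz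

theorem hasDerivAt_flux_hyp2F1_third {z : ℝ} (hz : |z| < 1) :
    HasDerivAt (fun x => x * (1 - x) * F₃' x) (2 / 9 * F₃ z) z := by
  convert hasDerivAt_flux_hyp2F1 (a := 1 / 3) (b := 2 / 3) (by norm_num) (by norm_num)
    (by norm_num) hz using 1
  norm_num

noncomputable def cubicMap (t : ℝ) : ℝ := 1 - ((1 - t) / (1 + 2 * t)) ^ 3

theorem hasDerivAt_cubicMap {t : ℝ} (ht : 1 + 2 * t ≠ 0) :
    HasDerivAt cubicMap (9 * (1 - t) ^ 2 / (1 + 2 * t) ^ 4) t := by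
  have h := ((((hasDerivAt_id' t).const_sub 1).fun_div
    (((hasDerivAt_id' t).const_mul 2).const_add 1) ht).fun_pow 3).const_sub 1
  refine h.congr_deriv ?_
  simp only [Nat.cast_ofNat, Nat.reduceSub]
  field_simp
  ring

theorem cubicMap_mem_Ico {t : ℝ} (ht : t ∈ Ico (0 : ℝ) 1) : cubicMap t ∈ Ico (0 : ℝ) 1 := by
  obtain ⟨ht₀, ht₁⟩ := ht
  have hu₀ : 0 < (1 - t) / (1 + 2 * t) := by apply div_pos <;> linarith
  have hu₁ : (1 - t) / (1 + 2 * t) ≤ 1 := by rw [div_le_one (by linarith)]; linarith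
  constructor
  · unfold cubicMap; nlinarith [pow_le_one₀ hu₀.le hu₁ (n := 3)]
  · unfold cubicMap; nlinarith [pow_pos hu₀ 3]

theorem hasDerivAt_hyp2F1_cube {t : ℝ} (ht : t ∈ Ico (0 : ℝ) 1) :
    HasDerivAt (fun s => (1 + 2 * s) * F₃ (s ^ 3))
      (2 * F₃ (t ^ 3) + (1 + 2 * t) * (3 * t ^ 2 * F₃' (t ^ 3))) t := by
  have hF := (hasDerivAt_hyp2F1_third (abs_lt_one_of_mem_Ico (cube_mem_Ico ht))).comp_of_eq t
    (hasDerivAt_pow 3 t) rfl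
  refine (((hasDerivAt_id' t).const_mul 2).const_add 1).fun_mul hF |>.congr_deriv ?_
  simp only [Function.comp_apply]
  push_cast
  ring

/-- The function differentiated is `ρ ((1 + 2 t) F(t³))'` with `ρ = t (1 - t³) / (1 + 2 t)²`,
written through `F` and its flux `x (1 - x) F'(x)` so that no second derivative of `F` occurs. -/
theorem hasDerivAt_flux_hyp2F1_cube {t : ℝ} (ht : t ∈ Ico (0 : ℝ) 1) :
    HasDerivAt (fun s => 2 * (s * (1 - s ^ 3) / (1 + 2 * s) ^ 2) * F₃ (s ^ 3)
        + 3 / (1 + 2 * s) * (s ^ 3 * (1 - s ^ 3) * F₃' (s ^ 3)))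
      (2 * (1 - t) ^ 2 / (1 + 2 * t) ^ 4 * ((1 + 2 * t) * F₃ (t ^ 3))) t := by
  have hz := abs_lt_one_of_mem_Ico (cube_mem_Ico ht)
  have h₀ : 1 + 2 * t ≠ 0 := by have := ht.1; positivity
  have hF := (hasDerivAt_hyp2F1_third hz).comp_of_eq t (hasDerivAt_pow 3 t) rfl
  have hG := (hasDerivAt_flux_hyp2F1_third hz).comp_of_eq t (hasDerivAt_pow 3 t) rfl
  have hL : HasDerivAt (fun s => 1 + 2 * s) 2 t := by
    simpa using ((hasDerivAt_id' t).const_mul 2).const_add 1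
  have hρ := ((hasDerivAt_id' t).fun_mul ((hasDerivAt_pow 3 t).const_sub 1)).fun_div (hL.fun_pow 2)
    (pow_ne_zero 2 h₀)
  have h := ((hρ.const_mul 2).fun_mul hF).fun_add (((hasDerivAt_const t 3).fun_div hL h₀).fun_mul hG)
  refine h.congr_deriv ?_
  simp only [Nat.cast_ofNat, Nat.reduceSub, Function.comp_apply]
  field_simp
  ring

theorem hasDerivAt_hyp2F1_cubicMap {t : ℝ} (ht : t ∈ Ico (0 : ℝ) 1) :
    HasDerivAt (fun s => F₃ (cubicMap s))
      (F₃' (cubicMap t) * (9 * (1 - t) ^ 2 / (1 + 2 * t) ^ 4)) t :=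
  (hasDerivAt_hyp2F1_third (abs_lt_one_of_mem_Ico (cubicMap_mem_Ico ht))).comp t
    (hasDerivAt_cubicMap (by have := ht.1; positivity))

theorem hasDerivAt_flux_hyp2F1_cubicMap {t : ℝ} (ht : t ∈ Ico (0 : ℝ) 1) :
    HasDerivAt (fun s => cubicMap s * (1 - cubicMap s) * F₃' (cubicMap s))
      (2 * (1 - t) ^ 2 / (1 + 2 * t) ^ 4 * F₃ (cubicMap t)) t :=
  ((hasDerivAt_flux_hyp2F1_third (abs_lt_one_of_mem_Ico (cubicMap_mem_Ico ht))).comp t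
    (hasDerivAt_cubicMap (by have := ht.1; positivity))).congr_deriv (by ring)

theorem cubicMap_mul_one_sub {t : ℝ} (ht : 1 + 2 * t ≠ 0) :
    cubicMap t * (1 - cubicMap t)
      = t * (1 - t ^ 3) / (1 + 2 * t) ^ 2 * (9 * (1 - t) ^ 2 / (1 + 2 * t) ^ 4) := by
  rw [cubicMap, div_pow, one_sub_div (pow_ne_zero 3 ht)]
  field_simp
  ring

theorem cubic_wronskian_eq_zero {t : ℝ} (ht : t ∈ Ioo (0 : ℝ) 1) :
    F₃' (cubicMap t) * (9 * (1 - t) ^ 2 / (1 + 2 * t) ^ 4) * ((1 + 2 * t) * F₃ (t ^ 3))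
      - F₃ (cubicMap t) * (2 * F₃ (t ^ 3) + (1 + 2 * t) * (3 * t ^ 2 * F₃' (t ^ 3))) = 0 := by
  have hρ : ∀ s ∈ Ico (0 : ℝ) 1, 1 + 2 * s ≠ 0 := fun s hs => by have := hs.1; positivity
  have hW : ∀ s ∈ Ico (0 : ℝ) 1, HasDerivAt (fun s => (1 + 2 * s) * F₃ (s ^ 3)
      * (cubicMap s * (1 - cubicMap s) * F₃' (cubicMap s)) - F₃ (cubicMap s)
      * (2 * (s * (1 - s ^ 3) / (1 + 2 * s) ^ 2) * F₃ (s ^ 3)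
        + 3 / (1 + 2 * s) * (s ^ 3 * (1 - s ^ 3) * F₃' (s ^ 3)))) 0 s := fun s hs =>
    hasDerivAt_wronskian_of_flux (P := s * (1 - s ^ 3) / (1 + 2 * s) ^ 2)
      (hasDerivAt_hyp2F1_cube hs) (hasDerivAt_hyp2F1_cubicMap hs)
      (hasDerivAt_flux_hyp2F1_cube hs) (hasDerivAt_flux_hyp2F1_cubicMap hs)
      (by have := hρ s hs; field_simp) (by rw [cubicMap_mul_one_sub (hρ s hs)]; ring)
  have hW0 := eq_of_hasDerivAt_eq_zero ht.1.le
    (fun s hs => (hW s ⟨hs.1, hs.2.trans_lt ht.2⟩).continuousAt.continuousWithinAt)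
    (fun s hs => hW s ⟨hs.1.le, hs.2.trans ht.2⟩)
  have hWt := hW0.trans (c := 0) (by simp [cubicMap])
  have h₀ : 1 + 2 * t ≠ 0 := hρ t ⟨ht.1.le, ht.2⟩
  have hρt : t * (1 - t ^ 3) / (1 + 2 * t) ^ 2 ≠ 0 := by
    have := pow_lt_one₀ ht.1.le ht.2 (by norm_num : 3 ≠ 0)
    have := ht.1
    apply div_ne_zero (mul_ne_zero ?_ ?_) (pow_ne_zero 2 h₀) <;> linarith
  rw [cubicMap_mul_one_sub h₀] at hWt
  refine (mul_eq_zero.mp ?_).resolve_left hρt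
  field_simp at hWt ⊢
  linear_combination hWt

theorem hyp2F1_cubicMap {t : ℝ} (ht : t ∈ Ico (0 : ℝ) 1) :
    F₃ (cubicMap t) = (1 + 2 * t) * F₃ (t ^ 3) := by
  have hpos : ∀ s ∈ Ico (0 : ℝ) 1, 0 < (1 + 2 * s) * F₃ (s ^ 3) := fun s hs =>
    mul_pos (by linarith [hs.1]) (zero_lt_one.trans_le
      (one_le_hyp2F1 (by norm_num) (by norm_num) (by norm_num) (cube_mem_Ico hs).1
        (cube_mem_Ico hs).2))
  have hQ : ∀ s ∈ Ico (0 : ℝ) 1, HasDerivAt (fun s => F₃ (cubicMap s) / ((1 + 2 * s) * F₃ (s ^ 3)))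
      _ s := fun s hs =>
    (hasDerivAt_hyp2F1_cubicMap hs).fun_div (hasDerivAt_hyp2F1_cube hs) (hpos s hs).ne'
  have hconst := eq_of_hasDerivAt_eq_zero ht.1
    (fun s hs => (hQ s ⟨hs.1, hs.2.trans_lt ht.2⟩).continuousAt.continuousWithinAt)
    (fun s hs => by
      have h := hQ s ⟨hs.1.le, hs.2.trans ht.2⟩
      rwa [cubic_wronskian_eq_zero ⟨hs.1, hs.2.trans ht.2⟩, zero_div] at h)
  rw [← div_eq_one_iff_eq (hpos t ht).ne', hconst]
  simp [cubicMap]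

end CubicTransformation

section CubicAGM

local notation "F₃" => hyp2F1 (1 / 3) (2 / 3) 1

theorem cubicAGM_step_bounds {a b b' : ℝ} (hb : 0 < b) (hba : b ≤ a) (hb'₀ : 0 ≤ b')
    (hb' : b' ^ 3 = b * (a ^ 2 + a * b + b ^ 2) / 3) : b ≤ b' ∧ b' ≤ (a + 2 * b) / 3 := by
  constructor
  · refine le_of_pow_le_pow_left₀ three_ne_zero hb'₀ ?_
    rw [hb']
    nlinarith [mul_nonneg (mul_nonneg hb.le (sub_nonneg.2 hba)) (by linarith : 0 ≤ a + 2 * b)]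
  · refine le_of_pow_le_pow_left₀ three_ne_zero (by linarith) ?_
    rw [hb']
    nlinarith [pow_nonneg (sub_nonneg.2 hba) 3]

/-- One step of the cubic AGM is the cubic transformation read backwards, with
`t = (1 - s) / (1 + 2 s)` for `s = b / a`. -/
theorem hyp2F1_cubicAGM_step {a b b' : ℝ} (hb : 0 < b) (hba : b ≤ a)
    (hb' : b' ^ 3 = b * (a ^ 2 + a * b + b ^ 2) / 3) :
    F₃ (1 - (b' / ((a + 2 * b) / 3)) ^ 3) / ((a + 2 * b) / 3) = F₃ (1 - (b / a) ^ 3) / a := by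
  have ha : 0 < a := hb.trans_le hba
  set s := b / a with hs
  have hs₀ : 0 < s := div_pos hb ha
  have hs₁ : s ≤ 1 := (div_le_one ha).2 hba
  have ht : (1 - s) / (1 + 2 * s) ∈ Ico (0 : ℝ) 1 :=
    ⟨div_nonneg (by linarith) (by linarith), (div_lt_one (by linarith)).2 (by linarith)⟩
  have key := hyp2F1_cubicMap ht
  have hmap : cubicMap ((1 - s) / (1 + 2 * s)) = 1 - s ^ 3 := by
    rw [cubicMap]
    congr 2
    field_simp
    ring
  have hcube : ((1 - s) / (1 + 2 * s)) ^ 3 = 1 - (b' / ((a + 2 * b) / 3)) ^ 3 := by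
    rw [div_pow _ ((a + 2 * b) / 3), hb', hs]
    field_simp
    ring
  rw [hmap, hcube] at key
  rw [key, hs]
  field_simp
  ring

theorem cubicAGM_succ_pow_three {a b : ℕ → ℝ}
    (hb : ∀ n, b (n + 1) = (b n * (a n ^ 2 + a n * b n + b n ^ 2) / 3) ^ ((1 : ℝ) / 3)) {n : ℕ}
    (hbn : 0 < b n) (hba : b n ≤ a n) : b (n + 1) ^ 3 = b n * (a n ^ 2 + a n * b n + b n ^ 2) / 3 := by
  have := hbn.le.trans hba
  rw [hb, rpow_one_third_pow_three (by positivity)]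

variable {a b : ℕ → ℝ} (ha : ∀ n, a (n + 1) = (a n + 2 * b n) / 3)
  (hb : ∀ n, b (n + 1) = (b n * (a n ^ 2 + a n * b n + b n ^ 2) / 3) ^ ((1 : ℝ) / 3))
  (hb₀ : 0 < b 0) (hab₀ : b 0 ≤ a 0)
include ha hb hb₀ hab₀

theorem cubicAGM_bounds (n : ℕ) : b 0 ≤ b n ∧ b n ≤ a n := by
  induction n with
  | zero => exact ⟨le_rfl, hab₀⟩
  | succ n ih =>
    have hbn : 0 < b n := hb₀.trans_le ih.1
    have han : 0 < a n := hbn.trans_le ih.2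
    obtain ⟨h₁, h₂⟩ := cubicAGM_step_bounds hbn ih.2 (by rw [hb]; positivity)
      (cubicAGM_succ_pow_three hb hbn ih.2)
    exact ⟨ih.1.trans h₁, (ha n).symm ▸ h₂⟩

theorem hyp2F1_cubicAGM_invariant (n : ℕ) :
    F₃ (1 - (b n / a n) ^ 3) / a n = F₃ (1 - (b 0 / a 0) ^ 3) / a 0 := by
  induction n with
  | zero => rfl
  | succ n ih =>
    obtain ⟨h₀, hba⟩ := cubicAGM_bounds ha hb hb₀ hab₀ n
    have hbn : 0 < b n := hb₀.trans_le h₀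
    rw [← ih, ha, ← hyp2F1_cubicAGM_step hbn hba (cubicAGM_succ_pow_three hb hbn hba)]

end CubicAGM

theorem borwein_cubic_agm_hypergeometric (k : ℝ) (hk0 : 0 < k) (hk1 : k ≤ 1)
    (a b : ℕ → ℝ) (ha0 : a 0 = 1) (hb0 : b 0 = k)
    (ha : ∀ n, a (n + 1) = (a n + 2 * b n) / 3)
    (hb : ∀ n, b (n + 1) = (b n * (a n ^ 2 + a n * b n + b n ^ 2) / 3) ^ ((1:ℝ)/3))
    (M : ℝ)
    (haM : Filter.Tendsto a Filter.atTop (nhds M))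
    (hbM : Filter.Tendsto b Filter.atTop (nhds M)) :
    M = 1 / hyp2F1 (1/3) (2/3) 1 (1 - k^3) := by
  have hb₀ : 0 < b 0 := hb0 ▸ hk0
  have hab₀ : b 0 ≤ a 0 := by rw [ha0, hb0]; exact hk1
  have hM : 0 < M := hb₀.trans_le <|
    ge_of_tendsto hbM (Eventually.of_forall fun n => (cubicAGM_bounds ha hb hb₀ hab₀ n).1)
  have hF : ContinuousAt (hyp2F1 (1 / 3) (2 / 3) 1) (1 - (M / M) ^ 3) := by
    rw [div_self hM.ne']
    exact (hasDerivAt_hyp2F1_third (by norm_num)).continuousAt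
  have hlim : Tendsto (fun n => hyp2F1 (1 / 3) (2 / 3) 1 (1 - (b n / a n) ^ 3) / a n) atTop
      (𝓝 (hyp2F1 (1 / 3) (2 / 3) 1 (1 - (M / M) ^ 3) / M)) :=
    (hF.tendsto.comp (((hbM.div haM hM.ne').pow 3).const_sub 1)).div haM hM.ne'
  simp_rw [hyp2F1_cubicAGM_invariant ha hb hb₀ hab₀, ha0, hb0, div_one] at hlim
  rw [tendsto_nhds_unique tendsto_const_nhds hlim, div_self hM.ne']
  simp
end

section
/- For the cubic AGM iteration a_{n+1} = (a_n + 2b_n)/3, b_{n+1} = (b_n(a_n² + a_n b_n + b_n²)/3)^{1/3} with a_0 ≥ b_0 > 0, the sequences (a_n) and (b_n) converge to a common positive limit, and the convergence is cubic: a_{n+1} − b_{n+1} = O((a_n − b_n)³). -/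
private lemma rt3_pow {x : ℝ} (hx : 0 ≤ x) : (x ^ ((1:ℝ)/3)) ^ 3 = x := by
  rw [← Real.rpow_natCast (x ^ ((1:ℝ)/3)) 3, ← Real.rpow_mul hx]
  norm_num

private lemma pow_rt3 {y : ℝ} (hy : 0 ≤ y) : ((y ^ 3 : ℝ)) ^ ((1:ℝ)/3) = y := by
  rw [← Real.rpow_natCast y 3, ← Real.rpow_mul hy]
  norm_num

private lemma cube_root_le {x y : ℝ} (hy : 0 ≤ y) (hx : 0 ≤ x) (h : x ≤ y ^ 3) :
    x ^ ((1:ℝ)/3) ≤ y := by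
  calc x ^ ((1:ℝ)/3) ≤ (y ^ 3) ^ ((1:ℝ)/3) :=
        Real.rpow_le_rpow hx h (by norm_num)
    _ = y := pow_rt3 hy

private lemma cube_root_ge {x y : ℝ} (hy : 0 ≤ y) (h : y ^ 3 ≤ x) :
    y ≤ x ^ ((1:ℝ)/3) := by
  calc y = (y ^ 3) ^ ((1:ℝ)/3) := (pow_rt3 hy).symm
    _ ≤ x ^ ((1:ℝ)/3) := Real.rpow_le_rpow (by positivity) h (by norm_num)

theorem cubic_agm_converges (a b : ℕ → ℝ) (hb0 : 0 < b 0) (hab0 : b 0 ≤ a 0)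
    (ha : ∀ n, a (n + 1) = (a n + 2 * b n) / 3)
    (hb : ∀ n, b (n + 1) = (b n * (a n ^ 2 + a n * b n + b n ^ 2) / 3) ^ ((1:ℝ)/3)) :
    ∃ M : ℝ, 0 < M ∧
      Filter.Tendsto a Filter.atTop (nhds M) ∧
      Filter.Tendsto b Filter.atTop (nhds M) ∧
      ∃ c : ℝ, ∀ n, a (n + 1) - b (n + 1) ≤ c * (a n - b n) ^ 3 := by
  -- invariant: 0 < b n ≤ a n
  have inv : ∀ n, 0 < b n ∧ b n ≤ a n := by
    intro n
    induction n with
    | zero => exact ⟨hb0, hab0⟩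
    | succ n ih =>
      obtain ⟨hbp, hba⟩ := ih
      have hap : 0 < a n := lt_of_lt_of_le hbp hba
      have hX : 0 < b n * (a n ^ 2 + a n * b n + b n ^ 2) / 3 := by positivity
      constructor
      · rw [hb n]; exact Real.rpow_pos_of_pos hX _
      · rw [hb n, ha n]
        refine cube_root_le (by linarith) hX.le ?_
        nlinarith [mul_nonneg (sub_nonneg.2 hba) (sq_nonneg (a n - b n))]
  -- b is monotone, a is antitone
  have hmonostep : ∀ n, b n ≤ b (n + 1) := by
    intro n
    obtain ⟨hbp, hba⟩ := inv n
    rw [hb n]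
    refine cube_root_ge hbp.le ?_
    nlinarith [mul_nonneg hbp.le (sub_nonneg.2 hba), mul_nonneg hbp.le (sq_nonneg (a n - b n))]
  have hantistep : ∀ n, a (n + 1) ≤ a n := by
    intro n; rw [ha n]; linarith [(inv n).2]
  have hmono : Monotone b := monotone_nat_of_le_succ hmonostep
  have hanti : Antitone a := antitone_nat_of_succ_le hantistep
  have hbub : ∀ n, b n ≤ a 0 := fun n => le_trans (inv n).2 (hanti (Nat.zero_le n))
  have halb : ∀ n, b 0 ≤ a n := fun n => le_trans (hmono (Nat.zero_le n)) (inv n).2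
  -- limits
  have htb : Filter.Tendsto b Filter.atTop (nhds (⨆ n, b n)) :=
    tendsto_atTop_ciSup hmono ⟨a 0, by rintro x ⟨n, rfl⟩; exact hbub n⟩
  have hta : Filter.Tendsto a Filter.atTop (nhds (⨅ n, a n)) :=
    tendsto_atTop_ciInf hanti ⟨b 0, by rintro x ⟨n, rfl⟩; exact halb n⟩
  -- gap goes to zero
  have hd : ∀ n, a n - b n ≤ (a 0 - b 0) * (1/3) ^ n := by
    intro n
    induction n with
    | zero => simp
    | succ n ih =>
      have h1 : a (n + 1) - b (n + 1) ≤ (a n - b n) / 3 := by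
        have := hmonostep n
        rw [ha n] at *; linarith
      have h3 : (0:ℝ) ≤ (1/3:ℝ) ^ n := by positivity
      calc a (n + 1) - b (n + 1) ≤ (a n - b n) / 3 := h1
        _ ≤ ((a 0 - b 0) * (1/3) ^ n) / 3 := by linarith
        _ = (a 0 - b 0) * (1/3) ^ (n + 1) := by ring
  have hd0 : Filter.Tendsto (fun n => a n - b n) Filter.atTop (nhds 0) := by
    refine squeeze_zero (fun n => sub_nonneg.2 (inv n).2) hd ?_
    have : Filter.Tendsto (fun n : ℕ => ((1:ℝ)/3) ^ n) Filter.atTop (nhds 0) :=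
      tendsto_pow_atTop_nhds_zero_of_lt_one (by norm_num) (by norm_num)
    simpa using this.const_mul (a 0 - b 0)
  have heq : (⨅ n, a n) = (⨆ n, b n) := by
    have h1 : Filter.Tendsto (fun n => a n - b n) Filter.atTop
        (nhds ((⨅ n, a n) - (⨆ n, b n))) := hta.sub htb
    have h2 := tendsto_nhds_unique h1 hd0
    linarith
  have hMpos : 0 < (⨆ n, b n) :=
    lt_of_lt_of_le hb0 (ge_of_tendsto' htb fun n => hmono (Nat.zero_le n))
  refine ⟨⨆ n, b n, hMpos, heq ▸ hta, htb, 1 / (81 * b 0 ^ 2), ?_⟩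
  intro n
  obtain ⟨hbp, hba⟩ := inv n
  have hap : 0 < a n := lt_of_lt_of_le hbp hba
  have hX : 0 ≤ b n * (a n ^ 2 + a n * b n + b n ^ 2) / 3 := by positivity
  have hv3 : b (n + 1) ^ 3 = b n * (a n ^ 2 + a n * b n + b n ^ 2) / 3 := by
    rw [hb n]; exact rt3_pow hX
  have hcube : a (n + 1) ^ 3 - b (n + 1) ^ 3 = (a n - b n) ^ 3 / 27 := by
    rw [hv3, ha n]; ring
  have hb0v : b 0 ≤ b (n + 1) := hmono (Nat.zero_le (n + 1))
  have hvu : b (n + 1) ≤ a (n + 1) := (inv (n + 1)).2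
  have h2 : 3 * b 0 ^ 2 ≤ a (n+1) ^ 2 + a (n+1) * b (n+1) + b (n+1) ^ 2 := by
    nlinarith [hb0, hb0v, hvu]
  have key : (a (n+1) - b (n+1)) * (81 * b 0 ^ 2) ≤ (a n - b n) ^ 3 := by
    nlinarith [mul_le_mul_of_nonneg_left h2 (sub_nonneg.2 hvu), hcube]
  have hb2 : (0:ℝ) < 81 * b 0 ^ 2 := by positivity
  calc a (n+1) - b (n+1) = (a (n+1) - b (n+1)) * (81 * b 0 ^ 2) / (81 * b 0 ^ 2) := by
        field_simp
    _ ≤ (a n - b n) ^ 3 / (81 * b 0 ^ 2) := by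
        gcongr
    _ = 1 / (81 * b 0 ^ 2) * (a n - b n) ^ 3 := by ring
end

section
/- Ekeland's variational principle: Let (X,d) be a complete metric space and f : X → ℝ ∪ {+∞} a lower semicontinuous function bounded below and not identically +∞. For every ε > 0 and every x₀ with f(x₀) ≤ inf f + ε, and every λ > 0, there exists x̄ ∈ X with f(x̄) ≤ f(x₀), d(x̄, x₀) ≤ λ, and f(x) > f(x̄) − (ε/λ) d(x, x̄) for all x ≠ x̄. -/
/-! Fix `α > 0` and write `x ≼ y` when `g x + α d(x, y) ≤ g y`, so that `ekelandSet g α y` is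
`{x | x ≼ y}`. This relation is transitive and, for lower semicontinuous `g`, its lower sections
are closed. Starting from `x₀`, pick `xₙ₊₁ ≼ xₙ` with `g xₙ₊₁` at most halfway between `g xₙ` and
the infimum of `g` below `xₙ`. As `g` decreases along the sequence, `d(xₙ, xₘ) ≤ (g xₙ - g xₘ) / α`
makes it Cauchy; its limit lies below every `xₙ`, and the halving forces every point below the
limit to have the same value of `g` as the limit, hence to be the limit itself.
For `f` with values in `ℝ ∪ {+∞}` one applies this to the real function `min f (f x₀)`. -/

open Set Filter Topology

lemma exists_mem_forall_two_mul_sub_le {X : Type*} {g : X → ℝ} {s : Set X} {y : X}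
    (hs : BddBelow (g '' s)) (hy : y ∈ s) :
    ∃ x ∈ s, ∀ z ∈ s, 2 * g x - g y ≤ g z := by
  have hinf : ∀ z ∈ s, sInf (g '' s) ≤ g z := fun z hz => csInf_le hs (mem_image_of_mem g hz)
  by_cases hlt : sInf (g '' s) < g y
  · obtain ⟨_, ⟨x, hx, rfl⟩, hgx⟩ :=
      exists_lt_of_csInf_lt (hs := ⟨g y, mem_image_of_mem g hy⟩)
        (show sInf (g '' s) < (sInf (g '' s) + g y) / 2 by linarith)
    exact ⟨x, hx, fun z hz => by linarith [hinf z hz]⟩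
  · exact ⟨y, hy, fun z hz => by linarith [hinf z hz]⟩

section Real

variable {X : Type*} [MetricSpace X] {g : X → ℝ} {α : ℝ} {x y : X}

def ekelandSet (g : X → ℝ) (α : ℝ) (y : X) : Set X :=
  {x | g x + α * dist x y ≤ g y}

lemma mem_ekelandSet : x ∈ ekelandSet g α y ↔ g x + α * dist x y ≤ g y := Iff.rfl

lemma mem_ekelandSet_self : y ∈ ekelandSet g α y := by
  simp [mem_ekelandSet]

lemma le_of_mem_ekelandSet (hα : 0 ≤ α) (h : x ∈ ekelandSet g α y) : g x ≤ g y := by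
  have : 0 ≤ α * dist x y := mul_nonneg hα dist_nonneg
  exact le_trans (by linarith) h

lemma lt_of_mem_ekelandSet_of_ne (hα : 0 < α) (h : x ∈ ekelandSet g α y) (hne : x ≠ y) :
    g x < g y := by
  have : 0 < α * dist x y := mul_pos hα (dist_pos.2 hne)
  exact lt_of_lt_of_le (by linarith) h

lemma ekelandSet_subset_of_mem (hα : 0 ≤ α) (h : x ∈ ekelandSet g α y) :
    ekelandSet g α x ⊆ ekelandSet g α y := fun z hz => by
  have : α * dist z y ≤ α * dist z x + α * dist x y := by
    rw [← mul_add]; exact mul_le_mul_of_nonneg_left (dist_triangle z x y) hα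
  simp only [mem_ekelandSet] at h hz ⊢
  linarith

lemma isClosed_ekelandSet (hg : LowerSemicontinuous g) (y : X) :
    IsClosed (ekelandSet g α y) :=
  (hg.add ((continuous_id.dist continuous_const).const_smul α).lowerSemicontinuous
    ).isClosed_preimage (g y)

lemma dist_le_of_mem_ekelandSet {ε lam : ℝ} (hε : 0 < ε) (hlam : 0 < lam)
    (h : x ∈ ekelandSet g (ε / lam) y) (hy : g y ≤ g x + ε) : dist x y ≤ lam := by
  have : ε / lam * dist x y ≤ ε := by simp only [mem_ekelandSet] at h; linarith
  rwa [div_mul_eq_mul_div, div_le_iff₀ hlam, mul_le_mul_iff_right₀ hε] at this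

section Sequence

variable {u : ℕ → X}

lemma antitone_ekelandSet_comp (hu : ∀ n, u (n + 1) ∈ ekelandSet g α (u n))
    (hα : 0 ≤ α) : Antitone fun n => ekelandSet g α (u n) :=
  antitone_nat_of_succ_le fun n => ekelandSet_subset_of_mem hα (hu n)

lemma mem_ekelandSet_of_le (hu : ∀ n, u (n + 1) ∈ ekelandSet g α (u n))
    (hα : 0 ≤ α) {n m : ℕ} (hnm : n ≤ m) : u m ∈ ekelandSet g α (u n) :=
  antitone_ekelandSet_comp hu hα hnm mem_ekelandSet_self

lemma antitone_comp_of_succ_mem_ekelandSet (hu : ∀ n, u (n + 1) ∈ ekelandSet g α (u n))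
    (hα : 0 ≤ α) : Antitone (g ∘ u) :=
  fun _ _ hnm => le_of_mem_ekelandSet (g := g) hα (mem_ekelandSet_of_le hu hα hnm)

lemma cauchySeq_of_succ_mem_ekelandSet (hu : ∀ n, u (n + 1) ∈ ekelandSet g α (u n))
    (hα : 0 < α) (hB : BddBelow (range g)) :
    CauchySeq u := by
  have hbdd : BddBelow (range (g ∘ u)) := hB.mono (range_comp_subset_range u g)
  set L := iInf (g ∘ u)
  refine cauchySeq_of_le_tendsto_0' (fun n => (g (u n) - L) / α) (fun n m hnm => ?_) ?_
  · have hm : g (u m) + α * dist (u m) (u n) ≤ g (u n) := mem_ekelandSet_of_le hu hα.le hnm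
    have hL : L ≤ g (u m) := ciInf_le hbdd m
    rw [dist_comm, le_div_iff₀ hα]
    linarith
  · have := ((tendsto_atTop_ciInf (antitone_comp_of_succ_mem_ekelandSet hu hα.le) hbdd
      ).sub_const L).div_const α
    rwa [sub_self, zero_div] at this

lemma mem_ekelandSet_of_tendsto (hu : ∀ n, u (n + 1) ∈ ekelandSet g α (u n))
    (hg : LowerSemicontinuous g) (hα : 0 ≤ α) {xbar : X}
    (hlim : Tendsto u atTop (𝓝 xbar)) (n : ℕ) : xbar ∈ ekelandSet g α (u n) :=
  (isClosed_ekelandSet hg _).mem_of_tendsto hlim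
    (eventually_atTop.2 ⟨n, fun _ hm => mem_ekelandSet_of_le hu hα hm⟩)

lemma eq_of_mem_ekelandSet_of_tendsto (hu : ∀ n, u (n + 1) ∈ ekelandSet g α (u n))
    (hg : LowerSemicontinuous g) (hα : 0 < α)
    (hnear : ∀ n, ∀ z ∈ ekelandSet g α (u n), 2 * g (u (n + 1)) - g (u n) ≤ g z)
    {xbar : X} (hlim : Tendsto u atTop (𝓝 xbar)) (hy : y ∈ ekelandSet g α xbar) : y = xbar := by
  have hxbar := mem_ekelandSet_of_tendsto hu hg hα.le hlim
  have hbdd : BddBelow (range (g ∘ u)) :=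
    ⟨g xbar, forall_mem_range.2 fun n => le_of_mem_ekelandSet hα.le (hxbar n)⟩
  set L := ⨅ n, g (u n)
  have hL : Tendsto (g ∘ u) atTop (𝓝 L) :=
    tendsto_atTop_ciInf (antitone_comp_of_succ_mem_ekelandSet hu hα.le) hbdd
  have hLy : 2 * L - L ≤ g y :=
    le_of_tendsto (((hL.comp (tendsto_add_atTop_nat 1)).const_mul 2).sub hL) <|
      Eventually.of_forall fun n => hnear n y (ekelandSet_subset_of_mem hα.le (hxbar n) hy)
  have hxbarL : g xbar ≤ L := le_ciInf fun n => le_of_mem_ekelandSet hα.le (hxbar n)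
  by_contra hne
  linarith [lt_of_mem_ekelandSet_of_ne hα hy hne]

end Sequence

theorem LowerSemicontinuous.exists_mem_ekelandSet_forall_lt [CompleteSpace X]
    (hg : LowerSemicontinuous g) (hB : BddBelow (range g)) (hα : 0 < α) (x₀ : X) :
    ∃ xbar ∈ ekelandSet g α x₀, ∀ x ≠ xbar, g xbar - α * dist x xbar < g x := by
  choose next hnext_mem hnext_le using fun y : X =>
    exists_mem_forall_two_mul_sub_le (hB.mono (image_subset_range g (ekelandSet g α y)))
      (mem_ekelandSet_self (y := y))
  set u : ℕ → X := fun n => next^[n] x₀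
  have hu_succ : ∀ n, u (n + 1) = next (u n) := fun n => Function.iterate_succ_apply' next n x₀
  have hu : ∀ n, u (n + 1) ∈ ekelandSet g α (u n) := fun n => hu_succ n ▸ hnext_mem (u n)
  obtain ⟨xbar, hlim⟩ :=
    cauchySeq_tendsto_of_complete (cauchySeq_of_succ_mem_ekelandSet hu hα hB)
  refine ⟨xbar, mem_ekelandSet_of_tendsto hu hg hα.le hlim 0, fun x hx => ?_⟩
  by_contra! hle
  refine hx (eq_of_mem_ekelandSet_of_tendsto hu hg hα (fun n => ?_) hlim ?_)
  · rw [hu_succ]; exact hnext_le (u n)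
  · simp only [mem_ekelandSet]; linarith

end Real

lemma lowerSemicontinuous_of_coe_ereal {X : Type*} [TopologicalSpace X] {g : X → ℝ}
    (hg : LowerSemicontinuous fun x => (g x : EReal)) : LowerSemicontinuous g :=
  lowerSemicontinuous_iff_isClosed_preimage.2 fun c => by
    convert hg.isClosed_preimage c using 1
    ext; simp

theorem ekeland_variational_principle_general {X : Type*} [MetricSpace X] [CompleteSpace X]
    (f : X → EReal) (hlsc : LowerSemicontinuous f)
    (hbot : ∀ x, f x ≠ ⊥)
    (hproper : ∃ x, f x ≠ ⊤)
    (ε : ℝ) (hε : 0 < ε) (lam : ℝ) (hlam : 0 < lam)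
    (x₀ : X) (hx₀ : f x₀ ≤ (⨅ x, f x) + (ε : EReal)) :
    ∃ xbar : X, f xbar ≤ f x₀ ∧ dist xbar x₀ ≤ lam ∧
      ∀ x : X, x ≠ xbar → f xbar - (((ε / lam) * dist x xbar : ℝ) : EReal) < f x := by
  have hinf_top : (⨅ x, f x) ≠ ⊤ :=
    let ⟨x, hx⟩ := hproper; ne_top_of_le_ne_top hx (iInf_le f x)
  have hinf_bot : (⨅ x, f x) ≠ ⊥ := fun h => hbot x₀ (by simpa [h] using hx₀)
  have hfx₀ : f x₀ ≠ ⊤ :=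
    ne_top_of_le_ne_top (EReal.add_ne_top hinf_top (EReal.coe_ne_top ε)) hx₀
  set g : X → ℝ := fun x => (min (f x) (f x₀)).toReal
  have hg_coe : ∀ x, (g x : EReal) = min (f x) (f x₀) := fun x =>
    EReal.coe_toReal (ne_top_of_le_ne_top hfx₀ (min_le_right _ _)) (by simp [hbot])
  have hg_lsc : LowerSemicontinuous g :=
    lowerSemicontinuous_of_coe_ereal <| by
      simpa only [hg_coe] using hlsc.inf lowerSemicontinuous_const
  have hg_ge : ∀ x, (⨅ x, f x).toReal ≤ g x := fun x => by
    rw [← EReal.coe_le_coe_iff, hg_coe, EReal.coe_toReal hinf_top hinf_bot]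
    exact le_min (iInf_le f x) (iInf_le f x₀)
  obtain ⟨xbar, hmem, hlt⟩ :=
    hg_lsc.exists_mem_ekelandSet_forall_lt ⟨_, forall_mem_range.2 hg_ge⟩ (div_pos hε hlam) x₀
  have hle : f xbar ≤ f x₀ := by
    by_contra! h
    have := lt_of_mem_ekelandSet_of_ne (div_pos hε hlam) hmem (ne_of_apply_ne f h.ne')
    simp only [← EReal.coe_lt_coe_iff, hg_coe, min_eq_right h.le, min_self, lt_self_iff_false]
      at this
  refine ⟨xbar, hle, dist_le_of_mem_ekelandSet hε hlam hmem ?_, fun x hx => ?_⟩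
  · have : (g x₀ : EReal) ≤ ((⨅ x, f x).toReal + ε : ℝ) := by
      rwa [hg_coe, min_self, EReal.coe_add, EReal.coe_toReal hinf_top hinf_bot]
    linarith [hg_ge xbar, EReal.coe_le_coe_iff.1 this]
  · calc f xbar - (((ε / lam) * dist x xbar : ℝ) : EReal)
        = ((g xbar - ε / lam * dist x xbar : ℝ) : EReal) := by
          rw [EReal.coe_sub, hg_coe, min_eq_left hle]
      _ < g x := EReal.coe_lt_coe_iff.2 (hlt x hx)
      _ ≤ f x := by rw [hg_coe]; exact min_le_left _ _

/-- Ekeland's variational principle. -/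
theorem ekeland_variational_principle {X : Type*} [MetricSpace X] [CompleteSpace X]
    (f : X → EReal) (hlsc : LowerSemicontinuous f)
    (hbdd : BddBelow (Set.range f)) (hbot : ∀ x, f x ≠ ⊥)
    (hproper : ∃ x, f x ≠ ⊤)
    (ε : ℝ) (hε : 0 < ε) (lam : ℝ) (hlam : 0 < lam)
    (x₀ : X) (hx₀ : f x₀ ≤ (⨅ x, f x) + (ε : EReal)) :
    ∃ xbar : X, f xbar ≤ f x₀ ∧ dist xbar x₀ ≤ lam ∧
      ∀ x : X, x ≠ xbar → f xbar - (((ε / lam) * dist x xbar : ℝ) : EReal) < f x :=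
  ekeland_variational_principle_general f hlsc hbot hproper ε hε lam hlam x₀ hx₀
end

section
/- Borwein–Preiss smooth variational principle: Let X be a Banach space and f : X → ℝ ∪ {+∞} a proper lower semicontinuous function bounded below. Given ε > 0, λ > 0, p ≥ 1, and x₀ with f(x₀) < inf f + ε, there exist a point v ∈ X with ‖v − x₀‖ ≤ λ and a sequence (x_i) in X converging to v with weights μ_i ≥ 0, ∑ μ_i = 1, such that f(v) + (ε/λ^p) ∑_i μ_i ‖v − x_i‖^p ≤ f(x₀), and the function x ↦ f(x) + (ε/λ^p) ∑_i μ_i ‖x − x_i‖^p attains a strong minimum at v. -/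
/-!
Build the centres greedily: at step `k` add the bump `c k * ‖· - x k‖ ^ p` to the current function
and take for `x (k + 1)` a point that does not raise its value and minimizes it up to
`c (k + 1) * r (k + 1) ^ p`. Comparing values at `x k` and `x (k + 1)` gives
`‖x (k + 1) - x k‖ ≤ r k`, so for summable radii the centres converge to some `v`. Lower
semicontinuity of the partial sums bounds the full perturbed function at `v` by its almost minimal
values along the centres, so `v` is a minimizer; and along any minimizing sequence `y n`, the
distance `‖y n - x k‖` is eventually hardly more than `r k`, which forces `y n → v`. Geometric
weights `(1 - a) a ^ i` and radii `λ (1 - a) a ^ i` with `a` small make the first step fit the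
hypothesis on `x₀`.
-/

open Filter Topology

namespace EReal

lemma coe_le_coe_of_add_le_add {m : EReal} (hbot : m ≠ ⊥) (htop : m ≠ ⊤) {a b : ℝ}
    (h : m + a ≤ m + b) : a ≤ b := by
  lift m to ℝ using ⟨htop, hbot⟩
  exact_mod_cast addLECancellable_coe m h

lemma lt_add_coe_of_pos {m : EReal} (hbot : m ≠ ⊥) (htop : m ≠ ⊤) {e : ℝ} (he : 0 < e) :
    m < m + e := by
  lift m to ℝ using ⟨htop, hbot⟩
  exact_mod_cast lt_add_of_pos_right m he

lemma tendsto_const_add_coe {α : Type*} {l : Filter α} {s : α → ℝ} {S : ℝ} (a : EReal)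
    (hs : Tendsto s l (𝓝 S)) : Tendsto (fun n => a + (s n : EReal)) l (𝓝 (a + S)) :=
  (continuousAt_add (.inr (coe_ne_bot S)) (.inr (coe_ne_top S))).tendsto.comp
    (tendsto_const_nhds.prodMk_nhds ((continuous_coe_real_ereal.tendsto S).comp hs))

end EReal

def IsStrongMinimum {α β : Type*} [TopologicalSpace α] [TopologicalSpace β] [Preorder β]
    (g : α → β) (v : α) : Prop :=
  (∀ y, g v ≤ g y) ∧ ∀ y : ℕ → α, Tendsto (g ∘ y) atTop (𝓝 (g v)) → Tendsto y atTop (𝓝 v)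

lemma exists_le_and_forall_le_add {α : Type*} {h : α → EReal} (hh : ⨅ y, h y ≠ ⊥) (z : α)
    {e : ℝ} (he : 0 < e) : ∃ y, h y ≤ h z ∧ ∀ w, h y ≤ h w + e := by
  obtain ⟨y₀, hy₀⟩ : ∃ y₀, h y₀ ≤ (⨅ y, h y) + e := by
    by_cases htop : ⨅ y, h y = ⊤
    · exact ⟨z, by simp [htop]⟩
    · obtain ⟨y₀, hy₀⟩ := iInf_lt_iff.1 (EReal.lt_add_coe_of_pos hh htop he)
      exact ⟨y₀, hy₀.le⟩
  have hle : ∀ w, (⨅ y, h y) + e ≤ h w + e := fun w => add_le_add_left (iInf_le h w) _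
  by_cases hz : h z ≤ (⨅ y, h y) + e
  · exact ⟨z, le_rfl, fun w => hz.trans (hle w)⟩
  · exact ⟨y₀, hy₀.trans (not_le.1 hz).le, fun w => hy₀.trans (hle w)⟩

open Classical in
noncomputable def nearMinimizerBelow {α : Type*} (h : α → EReal) (z : α) (e : ℝ) : α :=
  if H : ∃ y, h y ≤ h z ∧ ∀ w, h y ≤ h w + e then H.choose else z

lemma nearMinimizerBelow_spec {α : Type*} {h : α → EReal} (hh : ⨅ y, h y ≠ ⊥) (z : α) {e : ℝ}
    (he : 0 < e) :
    h (nearMinimizerBelow h z e) ≤ h z ∧ ∀ w, h (nearMinimizerBelow h z e) ≤ h w + e := by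
  have H := exists_le_and_forall_le_add hh z he
  rw [nearMinimizerBelow, dif_pos H]
  exact H.choose_spec

namespace BorweinPreiss

variable {X : Type*} [PseudoMetricSpace X] (f : X → EReal) (c : ℕ → ℝ) (p : ℝ)

noncomputable def perturbedUpTo (x : ℕ → X) (n : ℕ) (y : X) : EReal :=
  f y + ((∑ i ∈ Finset.range n, c i * dist y (x i) ^ p : ℝ) : EReal)

noncomputable def perturbed (x : ℕ → X) (y : X) : EReal :=
  f y + ((∑' i, c i * dist y (x i) ^ p : ℝ) : EReal)

variable {f c p}

@[simp]
lemma perturbedUpTo_zero (x : ℕ → X) : perturbedUpTo f c p x 0 = f := by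
  ext y
  simp [perturbedUpTo]

lemma perturbedUpTo_succ (x : ℕ → X) (n : ℕ) (y : X) :
    perturbedUpTo f c p x (n + 1) y =
      perturbedUpTo f c p x n y + ((c n * dist y (x n) ^ p : ℝ) : EReal) := by
  simp only [perturbedUpTo, Finset.sum_range_succ, EReal.coe_add, add_assoc]

lemma perturbedUpTo_mono (hc : ∀ i, 0 ≤ c i) (x : ℕ → X) (y : X) :
    Monotone fun n => perturbedUpTo f c p x n y :=
  monotone_nat_of_le_succ fun n => by
    rw [perturbedUpTo_succ]
    exact le_add_of_nonneg_right
      (EReal.coe_nonneg.2 (mul_nonneg (hc n) (Real.rpow_nonneg dist_nonneg _)))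

lemma le_perturbedUpTo (hc : ∀ i, 0 ≤ c i) (x : ℕ → X) (n : ℕ) (y : X) :
    f y ≤ perturbedUpTo f c p x n y := by
  simpa using perturbedUpTo_mono hc x y (Nat.zero_le n)

lemma perturbedUpTo_ne_bot (hf : ∀ y, f y ≠ ⊥) (x : ℕ → X) (n : ℕ) (y : X) :
    perturbedUpTo f c p x n y ≠ ⊥ :=
  EReal.add_ne_bot_iff.2 ⟨hf y, EReal.coe_ne_bot _⟩

lemma perturbed_ne_bot (hf : ∀ y, f y ≠ ⊥) (x : ℕ → X) (y : X) : perturbed f c p x y ≠ ⊥ :=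
  EReal.add_ne_bot_iff.2 ⟨hf y, EReal.coe_ne_bot _⟩

lemma lowerSemicontinuous_perturbedUpTo (hf : LowerSemicontinuous f) (hp : 0 ≤ p)
    (x : ℕ → X) (n : ℕ) : LowerSemicontinuous (perturbedUpTo f c p x n) := by
  have hφ : Continuous fun y => ∑ i ∈ Finset.range n, c i * dist y (x i) ^ p :=
    continuous_finsetSum _ fun i _ =>
      continuous_const.mul ((continuous_id.dist continuous_const).rpow_const fun _ => .inr hp)
  exact hf.add' (continuous_coe_real_ereal.comp hφ).lowerSemicontinuous fun y =>
    EReal.continuousAt_add (.inr (EReal.coe_ne_bot _)) (.inr (EReal.coe_ne_top _))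

lemma summable_mul_dist_rpow (hcs : Summable c) (hc : ∀ i, 0 ≤ c i) (hp : 0 ≤ p) {x : ℕ → X}
    (hx : Bornology.IsBounded (Set.range x)) (y : X) :
    Summable fun i => c i * dist y (x i) ^ p := by
  obtain ⟨R, hR⟩ := hx.subset_closedBall y
  refine hcs.mul_right (R ^ p) |>.of_nonneg_of_le
    (fun i => mul_nonneg (hc i) (Real.rpow_nonneg dist_nonneg _)) fun i => ?_
  have hi : dist (x i) y ≤ R := hR ⟨i, rfl⟩
  exact mul_le_mul_of_nonneg_left
    (Real.rpow_le_rpow dist_nonneg (dist_comm y (x i) ▸ hi) hp) (hc i)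

lemma tendsto_perturbedUpTo {x : ℕ → X} {y : X} (hs : Summable fun i => c i * dist y (x i) ^ p) :
    Tendsto (fun n => perturbedUpTo f c p x n y) atTop (𝓝 (perturbed f c p x y)) :=
  EReal.tendsto_const_add_coe (f y) hs.hasSum.tendsto_sum_nat

lemma perturbedUpTo_le_perturbed (hc : ∀ i, 0 ≤ c i) {x : ℕ → X} {y : X}
    (hs : Summable fun i => c i * dist y (x i) ^ p) (n : ℕ) :
    perturbedUpTo f c p x n y ≤ perturbed f c p x y :=
  (perturbedUpTo_mono hc x y).ge_of_tendsto (tendsto_perturbedUpTo hs) n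

lemma perturbed_le_of_eventually_le (hf : LowerSemicontinuous f) (hc : ∀ i, 0 ≤ c i)
    (hp : 0 ≤ p) {x : ℕ → X} {v : X} (hv : Tendsto x atTop (𝓝 v))
    (hs : Summable fun i => c i * dist v (x i) ^ p) {B : EReal}
    (hB : ∀ᶠ n in atTop, perturbedUpTo f c p x n (x n) ≤ B) : perturbed f c p x v ≤ B := by
  refine le_of_tendsto' (tendsto_perturbedUpTo hs) fun k => ?_
  refine (lowerSemicontinuous_perturbedUpTo hf hp x k).isClosed_preimage B |>.mem_of_tendsto hv ?_
  filter_upwards [hB, eventually_ge_atTop k] with n hn hkn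
  exact (perturbedUpTo_mono hc x (x n) hkn).trans hn

lemma dist_le_of_perturbedUpTo_succ_le {x : ℕ → X} {k : ℕ} {y : X} {R : ℝ} (hc : 0 < c k)
    (hp : 0 < p) (hR : 0 ≤ R) (hbot : perturbedUpTo f c p x k y ≠ ⊥)
    (htop : perturbedUpTo f c p x k y ≠ ⊤)
    (h : perturbedUpTo f c p x (k + 1) y ≤
      perturbedUpTo f c p x k y + ((c k * R ^ p : ℝ) : EReal)) :
    dist y (x k) ≤ R := by
  rw [perturbedUpTo_succ] at h
  exact (Real.rpow_le_rpow_iff dist_nonneg hR hp).1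
    (le_of_mul_le_mul_left (EReal.coe_le_coe_of_add_le_add hbot htop h) hc)

variable (f c p) in
structure IsDescentSeq (r : ℕ → ℝ) (x : ℕ → X) : Prop where
  descent : ∀ k, perturbedUpTo f c p x (k + 1) (x (k + 1)) ≤ perturbedUpTo f c p x k (x k)
  near_min : ∀ k y, perturbedUpTo f c p x k (x k) ≤
    perturbedUpTo f c p x k y + ((c k * r k ^ p : ℝ) : EReal)

namespace IsDescentSeq

variable {r : ℕ → ℝ} {x : ℕ → X}

lemma antitone (hx : IsDescentSeq f c p r x) : Antitone fun n => perturbedUpTo f c p x n (x n) :=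
  antitone_nat_of_succ_le hx.descent

lemma dist_succ_le (hx : IsDescentSeq f c p r x) (hf : ∀ y, f y ≠ ⊥) (hx₀ : f (x 0) ≠ ⊤)
    (hc : ∀ k, 0 < c k) (hp : 0 < p) (hr : ∀ k, 0 ≤ r k) (k : ℕ) :
    dist (x k) (x (k + 1)) ≤ r k := by
  have htop : perturbedUpTo f c p x k (x (k + 1)) ≠ ⊤ := by
    refine ne_top_of_le_ne_top hx₀ ?_
    calc perturbedUpTo f c p x k (x (k + 1))
        ≤ perturbedUpTo f c p x (k + 1) (x (k + 1)) :=
          perturbedUpTo_mono (fun i => (hc i).le) x _ k.le_succ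
      _ ≤ perturbedUpTo f c p x 0 (x 0) := hx.antitone (Nat.zero_le _)
      _ = f (x 0) := by rw [perturbedUpTo_zero]
  rw [dist_comm]
  exact dist_le_of_perturbedUpTo_succ_le (hc k) hp (hr k) (perturbedUpTo_ne_bot hf x k _) htop
    ((hx.descent k).trans (hx.near_min k _))

lemma perturbed_le (hx : IsDescentSeq f c p r x) (hf : LowerSemicontinuous f)
    (hc : ∀ i, 0 ≤ c i) (hp : 0 ≤ p) {v : X} (hv : Tendsto x atTop (𝓝 v))
    (hs : Summable fun i => c i * dist v (x i) ^ p) (k : ℕ) :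
    perturbed f c p x v ≤ perturbedUpTo f c p x k (x k) :=
  perturbed_le_of_eventually_le hf hc hp hv hs <|
    eventually_atTop.2 ⟨k, fun _ hn => hx.antitone hn⟩

lemma perturbed_le_perturbed (hx : IsDescentSeq f c p r x) (hf : LowerSemicontinuous f)
    (hc : ∀ i, 0 ≤ c i) (hcs : Summable c) (hp : 0 < p) (hrs : Summable r) {v : X}
    (hv : Tendsto x atTop (𝓝 v)) (hs : ∀ y, Summable fun i => c i * dist y (x i) ^ p) (y : X) :
    perturbed f c p x v ≤ perturbed f c p x y := by
  have he : Tendsto (fun n => c n * r n ^ p) atTop (𝓝 0) := by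
    simpa [Real.zero_rpow hp.ne'] using
      hcs.tendsto_atTop_zero.mul (hrs.tendsto_atTop_zero.rpow_const (.inr hp.le))
  refine ge_of_tendsto (by simpa using EReal.tendsto_const_add_coe (perturbed f c p x y) he)
    (Eventually.of_forall fun n => ?_)
  calc perturbed f c p x v ≤ perturbedUpTo f c p x n (x n) :=
        hx.perturbed_le hf hc hp.le hv (hs v) n
    _ ≤ perturbedUpTo f c p x n y + ((c n * r n ^ p : ℝ) : EReal) := hx.near_min n y
    _ ≤ perturbed f c p x y + ((c n * r n ^ p : ℝ) : EReal) :=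
        add_le_add_left (perturbedUpTo_le_perturbed hc (hs y) n) _

lemma eventually_dist_le (hx : IsDescentSeq f c p r x) (hf : LowerSemicontinuous f)
    (hfb : ∀ y, f y ≠ ⊥) (hx₀ : f (x 0) ≠ ⊤) (hc : ∀ k, 0 < c k) (hp : 0 < p)
    (hr : ∀ k, 0 ≤ r k) {v : X} (hv : Tendsto x atTop (𝓝 v))
    (hs : ∀ y, Summable fun i => c i * dist y (x i) ^ p) {y : ℕ → X}
    (hy : Tendsto (fun n => perturbed f c p x (y n)) atTop (𝓝 (perturbed f c p x v)))
    (k : ℕ) {R : ℝ} (hR : r k < R) : ∀ᶠ n in atTop, dist (y n) (x k) ≤ R := by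
  have hc₀ : ∀ i, 0 ≤ c i := fun i => (hc i).le
  have hvtop : perturbed f c p x v ≠ ⊤ := ne_top_of_le_ne_top hx₀ <| by
    simpa using hx.perturbed_le hf hc₀ hp.le hv (hs v) 0
  -- the slack `η` is chosen so that the bound below reads `c k * R ^ p`
  set η := c k * (R ^ p - r k ^ p)
  have hη : 0 < η := mul_pos (hc k) (sub_pos.2 (Real.rpow_lt_rpow (hr k) hR hp))
  filter_upwards [hy.eventually_lt_const
    (EReal.lt_add_coe_of_pos (perturbed_ne_bot hfb x v) hvtop hη)] with n hn
  have hle := perturbedUpTo_le_perturbed (f := f) hc₀ (hs (y n))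
  refine dist_le_of_perturbedUpTo_succ_le (hc k) hp ((hr k).trans hR.le)
    (perturbedUpTo_ne_bot hfb x k _) (ne_top_of_lt ((hle k).trans_lt hn)) ?_
  calc perturbedUpTo f c p x (k + 1) (y n) ≤ perturbed f c p x (y n) := hle (k + 1)
    _ ≤ perturbed f c p x v + η := hn.le
    _ ≤ perturbedUpTo f c p x k (x k) + η :=
        add_le_add_left (hx.perturbed_le hf hc₀ hp.le hv (hs v) k) _
    _ ≤ perturbedUpTo f c p x k (y n) + ((c k * r k ^ p : ℝ) : EReal) + η :=
        add_le_add_left (hx.near_min k _) _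
    _ = perturbedUpTo f c p x k (y n) + ((c k * R ^ p : ℝ) : EReal) := by
        rw [add_assoc, ← EReal.coe_add]
        congr 2
        ring

lemma tendsto_of_tendsto_perturbed (hx : IsDescentSeq f c p r x) (hf : LowerSemicontinuous f)
    (hfb : ∀ y, f y ≠ ⊥) (hx₀ : f (x 0) ≠ ⊤) (hc : ∀ k, 0 < c k) (hp : 0 < p)
    (hr : ∀ k, 0 ≤ r k) (hrs : Summable r) {v : X} (hv : Tendsto x atTop (𝓝 v))
    (hs : ∀ y, Summable fun i => c i * dist y (x i) ^ p) {y : ℕ → X}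
    (hy : Tendsto (fun n => perturbed f c p x (y n)) atTop (𝓝 (perturbed f c p x v))) :
    Tendsto y atTop (𝓝 v) := by
  refine Metric.tendsto_nhds.2 fun η hη => ?_
  obtain ⟨k, hrk, hxk⟩ := ((hrs.tendsto_atTop_zero.eventually (gt_mem_nhds (half_pos hη))).and
    (Metric.tendsto_nhds.1 hv _ (half_pos hη))).exists
  filter_upwards [hx.eventually_dist_le hf hfb hx₀ hc hp hr hv hs hy k hrk] with n hn
  calc dist (y n) v ≤ dist (y n) (x k) + dist (x k) v := dist_triangle _ _ _
    _ < η / 2 + η / 2 := add_lt_add_of_le_of_lt hn hxk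
    _ = η := add_halves η

end IsDescentSeq

variable (f c p) in
/-- The function `perturbedUpTo f c p x k` is carried along with `x k` because it depends on all
earlier centres. -/
noncomputable def descentStage (x₀ : X) (e : ℕ → ℝ) : ℕ → X × (X → EReal)
  | 0 => (x₀, f)
  | k + 1 =>
    let h : X → EReal := fun y =>
      (descentStage x₀ e k).2 y + ((c k * dist y (descentStage x₀ e k).1 ^ p : ℝ) : EReal)
    (nearMinimizerBelow h (descentStage x₀ e k).1 (e (k + 1)), h)

lemma descentStage_snd (x₀ : X) (e : ℕ → ℝ) (n : ℕ) :
    (descentStage f c p x₀ e n).2 =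
      perturbedUpTo f c p (fun k => (descentStage f c p x₀ e k).1) n := by
  induction n with
  | zero => exact (perturbedUpTo_zero _).symm
  | succ n ih =>
    funext y
    rw [perturbedUpTo_succ, ← ih]
    rfl

lemma exists_isDescentSeq (hf : ⨅ y, f y ≠ ⊥) (hc : ∀ k, 0 ≤ c k) (hp : p ≠ 0) {r : ℕ → ℝ}
    (he : ∀ k, 0 < c k * r k ^ p) {x₀ : X} (h₀ : ∀ y, f x₀ ≤ f y + ((c 0 * r 0 ^ p : ℝ) : EReal)) :
    ∃ x : ℕ → X, x 0 = x₀ ∧ IsDescentSeq f c p r x := by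
  set x : ℕ → X := fun k => (descentStage f c p x₀ (fun k => c k * r k ^ p) k).1
  have hx : ∀ k, x (k + 1) =
      nearMinimizerBelow (perturbedUpTo f c p x (k + 1)) (x k) (c (k + 1) * r (k + 1) ^ p) := by
    intro k
    show nearMinimizerBelow (descentStage f c p x₀ _ (k + 1)).2 _ _ = _
    rw [descentStage_snd]
  have hstep : ∀ k, _ := fun k => hx k ▸ nearMinimizerBelow_spec
    (ne_bot_of_le_ne_bot hf (iInf_mono fun y => le_perturbedUpTo hc x (k + 1) y)) (x k) (he (k + 1))
  refine ⟨x, rfl, fun k => ?_, fun k y => ?_⟩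
  · refine (hstep k).1.trans_eq ?_
    rw [perturbedUpTo_succ, dist_self, Real.zero_rpow hp, mul_zero, EReal.coe_zero, add_zero]
  · cases k with
    | zero => rw [perturbedUpTo_zero]; exact h₀ y
    | succ k => exact (hstep k).2 y

theorem exists_isStrongMinimum_perturbed [CompleteSpace X] {r : ℕ → ℝ}
    (hf : LowerSemicontinuous f) (hfb : ⨅ y, f y ≠ ⊥) (hc : ∀ k, 0 < c k) (hcs : Summable c)
    (hp : 0 < p) (hr : ∀ k, 0 < r k) (hrs : Summable r) {x₀ : X} (hx₀ : f x₀ ≠ ⊤)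
    (h₀ : ∀ y, f x₀ ≤ f y + ((c 0 * r 0 ^ p : ℝ) : EReal)) :
    ∃ (v : X) (x : ℕ → X), dist x₀ v ≤ ∑' k, r k ∧ Tendsto x atTop (𝓝 v) ∧
      perturbed f c p x v ≤ f x₀ ∧ IsStrongMinimum (perturbed f c p x) v := by
  have hc₀ : ∀ k, 0 ≤ c k := fun k => (hc k).le
  have hr₀ : ∀ k, 0 ≤ r k := fun k => (hr k).le
  have hfb' : ∀ y, f y ≠ ⊥ := fun y => ne_bot_of_le_ne_bot hfb (iInf_le f y)
  obtain ⟨x, rfl, hx⟩ := exists_isDescentSeq hfb hc₀ hp.ne'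
    (fun k => mul_pos (hc k) (Real.rpow_pos_of_pos (hr k) p)) h₀
  have hstep := hx.dist_succ_le hfb' hx₀ hc hp hr₀
  obtain ⟨v, hv⟩ := cauchySeq_tendsto_of_complete (cauchySeq_of_dist_le_of_summable r hstep hrs)
  have hs := summable_mul_dist_rpow hcs hc₀ hp.le (Metric.isBounded_range_of_tendsto x hv)
  refine ⟨v, x, dist_le_tsum_of_dist_le_of_tendsto₀ r hstep hrs hv, hv, ?_,
    hx.perturbed_le_perturbed hf hc₀ hcs hp hrs hv hs,
    fun y hy => hx.tendsto_of_tendsto_perturbed hf hfb' hx₀ hc hp hr₀ hrs hv hs hy⟩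
  simpa using hx.perturbed_le hf hc₀ hp.le hv (hs v) 0

noncomputable def geomWeight (a : ℝ) (i : ℕ) : ℝ := (1 - a) * a ^ i

lemma geomWeight_pos {a : ℝ} (ha₀ : 0 < a) (ha₁ : a < 1) (i : ℕ) : 0 < geomWeight a i :=
  mul_pos (sub_pos.2 ha₁) (pow_pos ha₀ i)

lemma summable_geomWeight {a : ℝ} (ha₀ : 0 ≤ a) (ha₁ : a < 1) : Summable (geomWeight a) :=
  (summable_geometric_of_lt_one ha₀ ha₁).mul_left _

lemma tsum_geomWeight {a : ℝ} (ha₀ : 0 ≤ a) (ha₁ : a < 1) : ∑' i, geomWeight a i = 1 := by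
  simp only [geomWeight]
  rw [tsum_mul_left, tsum_geometric_of_lt_one ha₀ ha₁,
    mul_inv_cancel₀ (sub_pos.2 ha₁).ne']

lemma exists_geomWeight_lt {m b : EReal} {ε lam : ℝ} (p : ℝ) (hlam : 0 < lam)
    (h : b < m + ε) : ∃ a ∈ Set.Ioo (0 : ℝ) 1,
      b < m + ((ε / lam ^ p * geomWeight a 0 * (lam * geomWeight a 0) ^ p : ℝ) : EReal) := by
  have hcont : ContinuousAt (fun a : ℝ => ε / lam ^ p * (1 - a) * (lam * (1 - a)) ^ p) 0 := by
    fun_prop (disch := simp [hlam.ne'])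
  have hlim : Tendsto (fun a : ℝ => ε / lam ^ p * (1 - a) * (lam * (1 - a)) ^ p)
      (𝓝[>] 0) (𝓝 ε) := by
    refine tendsto_nhdsWithin_of_tendsto_nhds ?_
    simpa [(Real.rpow_pos_of_pos hlam p).ne'] using hcont.tendsto
  obtain ⟨a, ha, hb⟩ := (Eventually.and (Ioo_mem_nhdsGT one_pos)
    ((EReal.tendsto_const_add_coe m hlim).eventually_const_lt h)).exists
  exact ⟨a, ha, by simpa [geomWeight] using hb⟩

lemma perturbed_const_mul {E : Type*} [SeminormedAddCommGroup E] (f : E → EReal) (δ : ℝ)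
    (μ : ℕ → ℝ) (p : ℝ) (x : ℕ → E) :
    perturbed f (fun i => δ * μ i) p x =
      fun y => f y + ((δ * ∑' i, μ i * ‖y - x i‖ ^ p : ℝ) : EReal) := by
  funext y
  simp only [perturbed, dist_eq_norm, mul_assoc, tsum_mul_left]

end BorweinPreiss

open BorweinPreiss

theorem borwein_preiss_variational_principle_general
    {X : Type*} [NormedAddCommGroup X] [CompleteSpace X]
    (f : X → EReal) (hlsc : LowerSemicontinuous f)
    (ε : ℝ) (hε : 0 < ε) (lam : ℝ) (hlam : 0 < lam) (p : ℝ) (hp : 1 ≤ p)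
    (x₀ : X) (hx₀ : f x₀ < (⨅ x, f x) + (ε : EReal)) :
    ∃ (v : X) (x : ℕ → X) (μ : ℕ → ℝ),
      ‖v - x₀‖ ≤ lam ∧
      Tendsto x atTop (nhds v) ∧
      (∀ i, 0 ≤ μ i) ∧ (∑' i, μ i) = 1 ∧
      f v + (((ε / lam ^ p) * ∑' i, μ i * ‖v - x i‖ ^ p : ℝ) : EReal) ≤ f x₀ ∧
      (∀ y : X,
        f v + (((ε / lam ^ p) * ∑' i, μ i * ‖v - x i‖ ^ p : ℝ) : EReal) ≤
        f y + (((ε / lam ^ p) * ∑' i, μ i * ‖y - x i‖ ^ p : ℝ) : EReal)) ∧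
      (∀ y : ℕ → X,
        Tendsto (fun n => f (y n) +
            (((ε / lam ^ p) * ∑' i, μ i * ‖y n - x i‖ ^ p : ℝ) : EReal))
          atTop
          (nhds (f v + (((ε / lam ^ p) * ∑' i, μ i * ‖v - x i‖ ^ p : ℝ) : EReal))) →
        Tendsto y atTop (nhds v)) := by
  have hfb : ⨅ y, f y ≠ ⊥ := fun h => by simp [h] at hx₀
  obtain ⟨a, ⟨ha₀, ha₁⟩, ha⟩ := exists_geomWeight_lt p hlam hx₀
  have hμ := geomWeight_pos ha₀ ha₁
  have hμs := summable_geomWeight ha₀.le ha₁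
  obtain ⟨v, x, hdist, hv, hval, hmin⟩ := exists_isStrongMinimum_perturbed
    (c := fun i => ε / lam ^ p * geomWeight a i) (r := fun i => lam * geomWeight a i) hlsc hfb
    (fun i => mul_pos (div_pos hε (Real.rpow_pos_of_pos hlam p)) (hμ i)) (hμs.mul_left _)
    (by linarith) (fun i => mul_pos hlam (hμ i)) (hμs.mul_left _) (ne_top_of_lt hx₀)
    fun y => ha.le.trans (add_le_add_left (iInf_le f y) _)
  rw [perturbed_const_mul] at hval hmin
  refine ⟨v, x, geomWeight a, ?_, hv, fun i => (hμ i).le, tsum_geomWeight ha₀.le ha₁, hval,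
    hmin.1, hmin.2⟩
  rw [← dist_eq_norm, dist_comm]
  calc dist x₀ v ≤ ∑' i, lam * geomWeight a i := hdist
    _ = lam := by rw [tsum_mul_left, tsum_geomWeight ha₀.le ha₁, mul_one]

/-- Borwein–Preiss smooth variational principle. -/
theorem borwein_preiss_variational_principle
    {X : Type*} [NormedAddCommGroup X] [NormedSpace ℝ X] [CompleteSpace X]
    (f : X → EReal) (hlsc : LowerSemicontinuous f)
    (hbdd : BddBelow (Set.range f)) (hbot : ∀ x, f x ≠ ⊥)
    (hproper : ∃ x, f x ≠ ⊤)
    (ε : ℝ) (hε : 0 < ε) (lam : ℝ) (hlam : 0 < lam) (p : ℝ) (hp : 1 ≤ p)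
    (x₀ : X) (hx₀ : f x₀ < (⨅ x, f x) + (ε : EReal)) :
    ∃ (v : X) (x : ℕ → X) (μ : ℕ → ℝ),
      ‖v - x₀‖ ≤ lam ∧
      Tendsto x atTop (nhds v) ∧
      (∀ i, 0 ≤ μ i) ∧ (∑' i, μ i) = 1 ∧
      f v + (((ε / lam ^ p) * ∑' i, μ i * ‖v - x i‖ ^ p : ℝ) : EReal) ≤ f x₀ ∧
      (∀ y : X,
        f v + (((ε / lam ^ p) * ∑' i, μ i * ‖v - x i‖ ^ p : ℝ) : EReal) ≤
        f y + (((ε / lam ^ p) * ∑' i, μ i * ‖y - x i‖ ^ p : ℝ) : EReal)) ∧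
      (∀ y : ℕ → X,
        Tendsto (fun n => f (y n) +
            (((ε / lam ^ p) * ∑' i, μ i * ‖y n - x i‖ ^ p : ℝ) : EReal))
          atTop
          (nhds (f v + (((ε / lam ^ p) * ∑' i, μ i * ‖v - x i‖ ^ p : ℝ) : EReal))) →
        Tendsto y atTop (nhds v)) :=
  borwein_preiss_variational_principle_general f hlsc ε hε lam hlam p hp x₀ hx₀
end
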